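/- arXiv:2307.07466 — 6 statements merged into one kernel-verified Lean document; each statement's English description precedes it below -/
import Mathlib

section
/- Suppose f : [0,T] → ℝ is continuously differentiable with f(0) = 0, and the partitions satisfy ‖P_N‖ → 0 as N → ∞. Then N·σ̂_ML²(N) → ∫₀ᵀ f'(x)² dx as N → ∞. -/
/-! By the mean value theorem, `(f_{n+1} - f_n)² / Δx_n = f'(ξ_n)² Δx_n` for some `ξ_n` in the
`n`-th cell, so `N·σ̂_ML²(N)` is a Riemann sum of the continuous function `f'²` and converges to
its integral as the mesh tends to zero. -/

open Filter Asymptotics Finset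

/-- `Δx_{N,n} = x_{N,n+1} - x_{N,n}`. -/
noncomputable def deltaX (pts : ℕ → ℕ → ℝ) (N n : ℕ) : ℝ := pts N (n + 1) - pts N n

/-- Mesh size `‖P_N‖ = max_{0 ≤ n ≤ N-1} Δx_{N,n}`. -/
noncomputable def meshSize (pts : ℕ → ℕ → ℝ) (N : ℕ) : ℝ :=
  ⨆ n ∈ Finset.range N, deltaX pts N n

/-- The ML scale estimator `σ̂_ML²(N) = (1/N) Σ_{n=1}^{N} (f_n − f_{n−1})²/Δx_{N,n−1}`. -/
noncomputable def sigmaML (pts : ℕ → ℕ → ℝ) (f : ℝ → ℝ) (N : ℕ) : ℝ :=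
  (1 / (N : ℝ)) *
    ∑ n ∈ Finset.range N, (f (pts N (n + 1)) - f (pts N n)) ^ 2 / deltaX pts N n

open Topology

section Partition

variable {p : ℕ → ℕ → ℝ} {N : ℕ}

lemma Icc_subset_Icc_of_forall_lt_succ {x : ℕ → ℝ} (hx : ∀ n < N, x n < x (n + 1)) {n : ℕ}
    (hn : n < N) : Set.Icc (x n) (x (n + 1)) ⊆ Set.Icc (x 0) (x N) := by
  have hmono : MonotoneOn x (Set.Iic N) := (strictMonoOn_Iic_of_lt_succ hx).monotoneOn
  exact Set.Icc_subset_Icc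
    (hmono (Set.mem_Iic.2 N.zero_le) (Set.mem_Iic.2 hn.le) n.zero_le)
    (hmono (Set.mem_Iic.2 hn) (Set.mem_Iic.2 le_rfl) hn)

lemma deltaX_le_meshSize {n : ℕ} (hn : n ∈ range N) : deltaX p N n ≤ meshSize p N :=
  le_ciSup₂ (f := fun m (_ : m ∈ range N) => deltaX p N m)
    (((range N).finite_toSet.image (deltaX p N)).bddAbove.mono <| by
      rintro _ ⟨_, ⟨m, rfl⟩, ⟨hm, rfl⟩⟩
      exact ⟨m, hm, rfl⟩) n hn

lemma sum_deltaX : ∑ n ∈ range N, deltaX p N n = p N N - p N 0 :=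
  sum_range_sub (p N) N

lemma natCast_mul_sigmaML {f : ℝ → ℝ} (hN : N ≠ 0) :
    N * sigmaML p f N = ∑ n ∈ range N, (f (p N (n + 1)) - f (p N n)) ^ 2 / deltaX p N n := by
  rw [sigmaML, ← mul_assoc, mul_one_div_cancel (Nat.cast_ne_zero.mpr hN), one_mul]

end Partition

lemma exists_mem_Ioo_derivWithin_eq_slope {f : ℝ → ℝ} {s : Set ℝ} {a b : ℝ} (hab : a < b)
    (hs : Set.Icc a b ⊆ s) (hf : DifferentiableOn ℝ f s) :
    ∃ c ∈ Set.Ioo a b, derivWithin f s c = (f b - f a) / (b - a) := by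
  have hnhds : ∀ x ∈ Set.Ioo a b, s ∈ 𝓝 x := fun x hx =>
    mem_of_superset (Ioo_mem_nhds hx.1 hx.2) (Set.Ioo_subset_Icc_self.trans hs)
  obtain ⟨c, hc, hslope⟩ := exists_deriv_eq_slope f hab (hf.mono hs).continuousOn fun x hx =>
    ((hf x (hs (Set.Ioo_subset_Icc_self hx))).differentiableAt (hnhds x hx)).differentiableWithinAt
  exact ⟨c, hc, (derivWithin_of_mem_nhds (hnhds c hc)).trans hslope⟩

lemma abs_mul_sub_integral_le {g : ℝ → ℝ} {u v c ε : ℝ} (huv : u ≤ v)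
    (hg : IntervalIntegrable g MeasureTheory.volume u v)
    (hclose : ∀ x ∈ Set.Icc u v, |g c - g x| ≤ ε) :
    |g c * (v - u) - ∫ x in u..v, g x| ≤ ε * (v - u) := by
  have hsub : g c * (v - u) - ∫ x in u..v, g x = ∫ x in u..v, (g c - g x) := by
    rw [intervalIntegral.integral_sub intervalIntegrable_const hg,
      intervalIntegral.integral_const, smul_eq_mul, mul_comm]
  calc |g c * (v - u) - ∫ x in u..v, g x| = ‖∫ x in u..v, (g c - g x)‖ := by rw [hsub]; rfl
    _ ≤ ε * |v - u| := intervalIntegral.norm_integral_le_of_norm_le_const fun x hx =>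
        hclose x (Set.Ioc_subset_Icc_self (Set.uIoc_of_le huv ▸ hx))
    _ = ε * (v - u) := by rw [abs_of_nonneg (sub_nonneg.2 huv)]

section RiemannSum

variable {p : ℕ → ℕ → ℝ} {N : ℕ} {g : ℝ → ℝ}

lemma abs_sum_mul_deltaX_sub_integral_le {c : ℕ → ℝ} {ε : ℝ}
    (hmono : ∀ n < N, p N n < p N (n + 1)) (hg : ContinuousOn g (Set.Icc (p N 0) (p N N)))
    (hclose : ∀ n < N, ∀ x ∈ Set.Icc (p N n) (p N (n + 1)), |g (c n) - g x| ≤ ε) :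
    |∑ n ∈ range N, g (c n) * deltaX p N n - ∫ x in p N 0..p N N, g x|
      ≤ ε * (p N N - p N 0) := by
  have hint : ∀ n < N, IntervalIntegrable g MeasureTheory.volume (p N n) (p N (n + 1)) :=
    fun n hn => (hg.mono <| by
      rw [Set.uIcc_of_le (hmono n hn).le]
      exact Icc_subset_Icc_of_forall_lt_succ hmono hn).intervalIntegrable
  rw [← intervalIntegral.sum_integral_adjacent_intervals hint, ← sum_sub_distrib, ← sum_deltaX,
    mul_sum]
  refine (abs_sum_le_sum_abs _ _).trans (sum_le_sum fun n hn => ?_)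
  rw [mem_range] at hn
  exact abs_mul_sub_integral_le (hmono n hn).le (hint n hn) (hclose n hn)

theorem tendsto_sum_mul_deltaX_integral {a b : ℝ} (hg : ContinuousOn g (Set.Icc a b))
    {c : ℕ → ℕ → ℝ} (hp0 : ∀ᶠ N in atTop, p N 0 = a) (hpN : ∀ᶠ N in atTop, p N N = b)
    (hmono : ∀ᶠ N in atTop, ∀ n < N, p N n < p N (n + 1))
    (hc : ∀ᶠ N in atTop, ∀ n < N, c N n ∈ Set.Icc (p N n) (p N (n + 1)))
    (hmesh : Tendsto (meshSize p) atTop (𝓝 0)) :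
    Tendsto (fun N => ∑ n ∈ range N, g (c N n) * deltaX p N n) atTop (𝓝 (∫ x in a..b, g x)) := by
  rw [Metric.tendsto_nhds]
  intro ε hε
  set ε' := ε / (|b - a| + 1)
  obtain ⟨δ, hδ, hunif⟩ := Metric.uniformContinuousOn_iff.mp
    (isCompact_Icc.uniformContinuousOn_of_continuous hg) ε' (by positivity)
  filter_upwards [hp0, hpN, hmono, hc, hmesh.eventually (gt_mem_nhds hδ)]
    with N hN0 hNN hmonoN hcN hmeshN
  have hclose : ∀ n < N, ∀ x ∈ Set.Icc (p N n) (p N (n + 1)), |g (c N n) - g x| ≤ ε' := by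
    intro n hn x hx
    have hsub := Icc_subset_Icc_of_forall_lt_succ hmonoN hn
    rw [hN0, hNN] at hsub
    refine (hunif _ (hsub (hcN n hn)) x (hsub hx) ?_).le
    calc dist (c N n) x ≤ deltaX p N n := Real.dist_le_of_mem_Icc (hcN n hn) hx
      _ ≤ meshSize p N := deltaX_le_meshSize (mem_range.2 hn)
      _ < δ := hmeshN
  have hbound := abs_sum_mul_deltaX_sub_integral_le hmonoN (hN0 ▸ hNN ▸ hg) hclose
  rw [hN0, hNN] at hbound
  have hε'ε : ε' * |b - a| < ε := by
    rw [div_mul_eq_mul_div, div_lt_iff₀ (by positivity)]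
    linarith
  calc dist _ _ ≤ ε' * (b - a) := (Real.dist_eq _ _).trans_le hbound
    _ ≤ ε' * |b - a| := by gcongr; exact le_abs_self _
    _ < ε := hε'ε

end RiemannSum

theorem ml_limit_C1_general (T : ℝ) (hT : 0 < T) (pts : ℕ → ℕ → ℝ)
    (hx0 : ∀ N, pts N 0 = 0) (hxT : ∀ N, pts N N = T)
    (hmono : ∀ N, ∀ n < N, pts N n < pts N (n + 1))
    (hmesh : Tendsto (fun N => meshSize pts N) atTop (nhds 0))
    (f : ℝ → ℝ) (hf : ContDiffOn ℝ 1 f (Set.Icc 0 T)) :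
    Tendsto (fun N : ℕ => (N : ℝ) * sigmaML pts f N) atTop
      (nhds (∫ x in (0 : ℝ)..T, (derivWithin f (Set.Icc 0 T) x) ^ 2)) := by
  set s := Set.Icc 0 T
  have hg : ContinuousOn (fun x => derivWithin f s x ^ 2) s :=
    (hf.continuousOn_derivWithin (uniqueDiffOn_Icc hT) le_rfl).pow 2
  have hslope : ∀ N n, n < N → ∃ c ∈ Set.Icc (pts N n) (pts N (n + 1)),
      derivWithin f s c = (f (pts N (n + 1)) - f (pts N n)) / deltaX pts N n := by
    intro N n hn
    have hpiece : Set.Icc (pts N n) (pts N (n + 1)) ⊆ s := by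
      simpa only [hx0, hxT] using Icc_subset_Icc_of_forall_lt_succ (hmono N) hn
    obtain ⟨c, hc, hcslope⟩ := exists_mem_Ioo_derivWithin_eq_slope (hmono N n hn) hpiece
      (hf.differentiableOn one_ne_zero)
    exact ⟨c, Set.Ioo_subset_Icc_self hc, hcslope⟩
  choose! c hc hcslope using hslope
  refine (tendsto_sum_mul_deltaX_integral hg (.of_forall hx0) (.of_forall hxT)
    (.of_forall hmono) (.of_forall hc) hmesh).congr' ?_
  filter_upwards [eventually_ne_atTop 0] with N hN
  rw [natCast_mul_sigmaML hN]
  refine sum_congr rfl fun n hn => ?_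
  have hΔ : deltaX pts N n ≠ 0 := (sub_pos.2 (hmono N n (mem_range.1 hn))).ne'
  rw [hcslope N n (mem_range.1 hn)]
  field_simp

/-- If `f` is continuously differentiable on `[0,T]` with `f(0) = 0` and `‖P_N‖ → 0`, then
`N·σ̂_ML²(N) → ∫₀ᵀ f'(x)² dx` as `N → ∞`. -/
theorem ml_limit_C1 (T : ℝ) (hT : 0 < T) (pts : ℕ → ℕ → ℝ)
    (hx0 : ∀ N, pts N 0 = 0) (hxT : ∀ N, pts N N = T)
    (hmono : ∀ N, ∀ n < N, pts N n < pts N (n + 1))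
    (hmesh : Tendsto (fun N => meshSize pts N) atTop (nhds 0))
    (f : ℝ → ℝ) (hf : ContDiffOn ℝ 1 f (Set.Icc 0 T)) (hf0 : f 0 = 0) :
    Tendsto (fun N : ℕ => (N : ℝ) * sigmaML pts f N) atTop
      (nhds (∫ x in (0 : ℝ)..T, (derivWithin f (Set.Icc 0 T) x) ^ 2)) :=
  ml_limit_C1_general T hT pts hx0 hxT hmono hmesh f hf
end

section
/- Let P_N be the equally-spaced partitions x_{N,n} = nT/N. Suppose f : [0,T] → ℝ satisfies f(0) = 0, lim_{x→0⁺} f(x) = f(0), lim_{x→T⁻} f(x) = f(T), f has finite quadratic variation V²(f) with respect to (P_N), and, moreover, for every sequence of partitions of [0,T] that is quasi-uniform with constant C_qu ≤ 2 and whose mesh tends to 0, f has finite quadratic variation with respect to that sequence equal to the same value V²(f). Then lim_{N→∞} σ̂_CV²(N) = V²(f)/T. -/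
open Filter Asymptotics Finset

/-- The LOO-CV scale estimator for the Brownian motion kernel, written as a function of the
values `g n = f(x_{N,n})`. -/
noncomputable def sigmaCVg (pts : ℕ → ℕ → ℝ) (N : ℕ) (g : ℕ → ℝ) : ℝ :=
  (1 / (N : ℝ)) *
    ((pts N 2 * g 1 - pts N 1 * g 2) ^ 2 / (pts N 1 * pts N 2 * deltaX pts N 1)
      + ∑ n ∈ Finset.Icc 2 (N - 1),
          (deltaX pts N (n - 1) * (g (n + 1) - g n) - deltaX pts N n * (g n - g (n - 1))) ^ 2 /
            ((deltaX pts N n + deltaX pts N (n - 1)) * deltaX pts N n * deltaX pts N (n - 1))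
      + (g N - g (N - 1)) ^ 2 / deltaX pts N (N - 1))

/-- The LOO-CV scale estimator `σ̂_CV²(N)` for data `f(x_{N,1}), …, f(x_{N,N})`. -/
noncomputable def sigmaCV (pts : ℕ → ℕ → ℝ) (f : ℝ → ℝ) (N : ℕ) : ℝ :=
  sigmaCVg pts N fun n => f (pts N n)

/-- The equally-spaced partition `x_{N,n} = nT/N` of `[0,T]`. -/
noncomputable def eqPts (T : ℝ) : ℕ → ℕ → ℝ := fun N n => (n : ℝ) * T / (N : ℝ)


/-!
On the uniform grid the estimator is `T⁻¹` times half the sum of the squared second differences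
of the data, plus a boundary term. The parallelogram law `(a - b)² + (a + b)² = 2a² + 2b²`,
applied to consecutive increments, trades these for twice the quadratic variation along the grid
minus half the sum of the squared skip-one increments `f(x_{n+1}) - f(x_{n-1})`. The latter split
into the quadratic variations along the even- and the odd-indexed subgrids, which are
quasi-uniform with constant `2`, so each tends to `V²(f)`; the boundary terms vanish by continuity
of `f` at `0` and `T`. Hence `T σ̂²_CV(N) → 2V²(f) - V²(f)`.
-/

open Topology

lemma eqPts_sub (T : ℝ) (N a b : ℕ) : eqPts T N b - eqPts T N a = ((b : ℝ) - a) * (T / N) := by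
  unfold eqPts
  ring

lemma eqPts_zero (T : ℝ) (N : ℕ) : eqPts T N 0 = 0 := by
  simp [eqPts]

lemma eqPts_self (T : ℝ) {N : ℕ} (hN : N ≠ 0) : eqPts T N N = T := by
  unfold eqPts
  field_simp

lemma deltaX_eqPts (T : ℝ) (N n : ℕ) : deltaX (eqPts T) N n = T / N := by
  rw [deltaX, eqPts_sub]
  push_cast
  ring

lemma tendsto_eqPts_succ_one {T : ℝ} (hT : 0 < T) :
    Tendsto (fun N : ℕ => eqPts T (N + 1) 1) atTop (𝓝[>] 0) := by
  have hpt (N : ℕ) : eqPts T (N + 1) 1 = T * (1 / ((N : ℝ) + 1)) := by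
    simp [eqPts, div_eq_mul_inv]
  simp only [hpt]
  refine tendsto_nhdsWithin_iff.2 ⟨?_, Eventually.of_forall fun N => ?_⟩
  · simpa using tendsto_one_div_add_atTop_nhds_zero_nat.const_mul T
  · simp only [Set.mem_Ioi]
    positivity

lemma tendsto_eqPts_succ_self {T : ℝ} (hT : 0 < T) :
    Tendsto (fun N : ℕ => eqPts T (N + 1) N) atTop (𝓝[<] T) := by
  have hpt (N : ℕ) : eqPts T (N + 1) N = T - T * (1 / ((N : ℝ) + 1)) := by
    unfold eqPts
    push_cast
    field_simp
    ring
  simp only [hpt]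
  refine tendsto_nhdsWithin_iff.2 ⟨?_, Eventually.of_forall fun N => ?_⟩
  · simpa using tendsto_const_nhds.sub (tendsto_one_div_add_atTop_nhds_zero_nat.const_mul T)
  · simp only [Set.mem_Iio, sub_lt_self_iff]
    positivity

lemma sigmaCVg_eqPts {T : ℝ} (hT : T ≠ 0) {N : ℕ} (hN : N ≠ 0) (g : ℕ → ℝ) :
    sigmaCVg (eqPts T) N g = ((2 * g 1 - g 2) ^ 2 / 2
      + ∑ n ∈ Icc 2 (N - 1), (g (n + 1) - 2 * g n + g (n - 1)) ^ 2 / 2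
      + (g N - g (N - 1)) ^ 2) / T := by
  have hN' : (N : ℝ) ≠ 0 := Nat.cast_ne_zero.2 hN
  have hpt (k : ℕ) : eqPts T N k = k * (T / N) := by rw [eqPts, mul_div_assoc]
  have hsum : ∑ n ∈ Icc 2 (N - 1),
      (T / N * (g (n + 1) - g n) - T / N * (g n - g (n - 1))) ^ 2 /
        ((T / N + T / N) * (T / N) * (T / N))
      = (N / T) * ∑ n ∈ Icc 2 (N - 1), (g (n + 1) - 2 * g n + g (n - 1)) ^ 2 / 2 := by
    rw [mul_sum]
    refine sum_congr rfl fun n _ => ?_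
    field_simp
    ring
  simp only [sigmaCVg, deltaX_eqPts, hpt 1, hpt 2]
  rw [hsum]
  push_cast
  field_simp

lemma sum_sq_second_diff (g : ℕ → ℝ) (hg0 : g 0 = 0) {N : ℕ} (hN : 2 ≤ N) :
    (2 * g 1 - g 2) ^ 2 / 2
      + ∑ n ∈ Icc 2 (N - 1), (g (n + 1) - 2 * g n + g (n - 1)) ^ 2 / 2
      + (g N - g (N - 1)) ^ 2
    = 2 * ∑ n ∈ range N, (g (n + 1) - g n) ^ 2 - g 1 ^ 2
      - (∑ n ∈ range (N - 1), (g (n + 2) - g n) ^ 2) / 2 := by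
  induction N, hN using Nat.le_induction with
  | base =>
    rw [Icc_eq_empty (by omega)]
    simp only [sum_empty, sum_range_succ, range_one, sum_singleton, Nat.add_one_sub_one, hg0]
    ring
  | succ N hN ih =>
    obtain ⟨m, rfl⟩ : ∃ m, N = m + 2 := ⟨N - 2, by omega⟩
    simp only [show m + 2 - 1 = m + 1 from rfl, show m + 2 + 1 - 1 = m + 2 from rfl] at ih ⊢
    rw [sum_Icc_succ_top (by omega), sum_range_succ (fun n => (g (n + 1) - g n) ^ 2),
      sum_range_succ (fun n => (g (n + 2) - g n) ^ 2), Nat.add_sub_cancel]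
    linear_combination ih

lemma sum_range_two_mul (G : ℕ → ℝ) (K : ℕ) :
    ∑ n ∈ range (2 * K), G n = ∑ j ∈ range K, (G (2 * j) + G (2 * j + 1)) := by
  induction K with
  | zero => simp
  | succ K ih => rw [Nat.mul_succ, sum_range_succ, sum_range_succ, sum_range_succ, ih, add_assoc]

def qvSum {α : Type*} (g : α → ℝ) (x : ℕ → α) (M : ℕ) : ℝ :=
  ∑ j ∈ range M, (g (x (j + 1)) - g (x j)) ^ 2

def evenIdx (N j : ℕ) : ℕ := min (2 * j) N

/-- Since `2 * 0 - 1 = 0` in `ℕ`, these are the indices `0, 1, 3, 5, …, N`. -/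
def oddIdx (N j : ℕ) : ℕ := min (2 * j - 1) N

lemma sum_sq_skip_diff_eq (g : ℕ → ℝ) {N : ℕ} (hN : N ≠ 0) :
    (g 1 - g 0) ^ 2 + ∑ n ∈ range (N - 1), (g (n + 2) - g n) ^ 2 + (g N - g (N - 1)) ^ 2
      = qvSum g (evenIdx N) ((N + 1) / 2) + qvSum g (oddIdx N) (N / 2 + 1) := by
  -- extending `g` constantly beyond `N` turns both boundary terms into skip-one increments
  set G : ℕ → ℝ := fun n => (g (min (n + 1) N) - g (min (n - 1) N)) ^ 2
  have hG_tail : ∀ n ≥ N + 1, G n = 0 := fun n hn => by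
    simp [G, min_eq_right (by omega : N ≤ n + 1), min_eq_right (by omega : N ≤ n - 1)]
  have hlhs : (g 1 - g 0) ^ 2 + ∑ n ∈ range (N - 1), (g (n + 2) - g n) ^ 2
      + (g N - g (N - 1)) ^ 2 = ∑ n ∈ range (N + 1), G n := by
    obtain ⟨m, rfl⟩ : ∃ m, N = m + 1 := ⟨N - 1, by omega⟩
    have hmid : ∑ n ∈ range m, (g (n + 2) - g n) ^ 2 = ∑ n ∈ range m, G (n + 1) :=
      sum_congr rfl fun n hn => by
        rw [mem_range] at hn
        simp only [G, Nat.add_sub_cancel, min_eq_left (by omega : n + 1 + 1 ≤ m + 1),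
          min_eq_left (by omega : n ≤ m + 1)]
    have hfirst : G 0 = (g 1 - g 0) ^ 2 := by
      simp only [G, zero_tsub, min_eq_left (by omega : 0 + 1 ≤ m + 1), zero_le, min_eq_left]
    have hlast : G (m + 1) = (g (m + 1) - g m) ^ 2 := by
      simp only [G, Nat.add_sub_cancel, min_eq_right (by omega : m + 1 ≤ m + 1 + 1),
        min_eq_left (by omega : m ≤ m + 1)]
    rw [sum_range_succ, sum_range_succ', Nat.add_sub_cancel, hmid, hfirst, hlast]
    ring
  have heven : qvSum g (evenIdx N) ((N + 1) / 2) = ∑ j ∈ range (N + 1), G (2 * j + 1) :=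
    (eventually_constant_sum (u := fun j => G (2 * j + 1)) (fun j hj => hG_tail _ (by omega))
      (by omega)).symm
  have hodd : qvSum g (oddIdx N) (N / 2 + 1) = ∑ j ∈ range (N + 1), G (2 * j) :=
    (eventually_constant_sum (u := fun j => G (2 * j)) (fun j hj => hG_tail _ (by omega))
      (by omega)).symm
  rw [hlhs, add_comm (qvSum g (evenIdx N) _), heven, hodd, ← sum_add_distrib, ← sum_range_two_mul]
  exact (eventually_constant_sum hG_tail (by omega)).symm

lemma sigmaCVg_eqPts_eq_qvSum {T : ℝ} (hT : T ≠ 0) (g : ℕ → ℝ) (hg0 : g 0 = 0) {N : ℕ}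
    (hN : 2 ≤ N) :
    sigmaCVg (eqPts T) N g = (2 * ∑ n ∈ range N, (g (n + 1) - g n) ^ 2 - g 1 ^ 2 / 2
      - (qvSum g (evenIdx N) ((N + 1) / 2) + qvSum g (oddIdx N) (N / 2 + 1)) / 2
      + (g N - g (N - 1)) ^ 2 / 2) / T := by
  rw [sigmaCVg_eqPts hT (by omega), sum_sq_second_diff g hg0 hN,
    ← sum_sq_skip_diff_eq g (by omega), hg0]
  ring

structure IsTwoCoarsening (idx : ℕ → ℕ) (M N : ℕ) : Prop where
  zero : idx 0 = 0
  last : idx M = N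
  lt_succ : ∀ n < M, idx n < idx (n + 1)
  succ_le : ∀ n < M, idx (n + 1) ≤ idx n + 2

lemma isTwoCoarsening_evenIdx (N : ℕ) : IsTwoCoarsening (evenIdx N) ((N + 1) / 2) N where
  zero := by simp [evenIdx]
  last := by simp only [evenIdx]; omega
  lt_succ n hn := by simp only [evenIdx]; omega
  succ_le n hn := by simp only [evenIdx]; omega

lemma isTwoCoarsening_oddIdx {N : ℕ} (hN : N ≠ 0) : IsTwoCoarsening (oddIdx N) (N / 2 + 1) N where
  zero := by simp [oddIdx]
  last := by simp only [oddIdx]; omega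
  lt_succ n hn := by simp only [oddIdx]; omega
  succ_le n hn := by simp only [oddIdx]; omega

namespace IsTwoCoarsening

variable {idx : ℕ → ℕ} {M N : ℕ} (h : IsTwoCoarsening idx M N) {T : ℝ} (hT : 0 ≤ T)
include h hT

lemma le_eqPts_sub {n : ℕ} (hn : n < M) : T / N ≤ eqPts T N (idx (n + 1)) - eqPts T N (idx n) := by
  have hstep : (idx n : ℝ) + 1 ≤ idx (n + 1) := by exact_mod_cast h.lt_succ n hn
  rw [eqPts_sub]
  nlinarith [div_nonneg hT N.cast_nonneg]

lemma eqPts_sub_le {n : ℕ} (hn : n < M) :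
    eqPts T N (idx (n + 1)) - eqPts T N (idx n) ≤ 2 * (T / N) := by
  have hstep : (idx (n + 1) : ℝ) ≤ idx n + 2 := by exact_mod_cast h.succ_le n hn
  rw [eqPts_sub]
  nlinarith [div_nonneg hT N.cast_nonneg]

end IsTwoCoarsening

structure IsQuasiUniformPartitionSeq (T : ℝ) (M : ℕ → ℕ) (q : ℕ → ℕ → ℝ) : Prop where
  zero : ∀ N, q N 0 = 0
  last : ∀ N, q N (M N) = T
  lt_succ : ∀ N, ∀ n < M N, q N n < q N (n + 1)
  le_two_mul : ∀ N, ∀ m < M N, ∀ n < M N, q N (m + 1) - q N m ≤ 2 * (q N (n + 1) - q N n)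
  tendsto_mesh : Tendsto (fun N => ⨆ n ∈ range (M N), (q N (n + 1) - q N n)) atTop (𝓝 0)

/-- Indexed by `N + 1` so that every member of the family is a genuine partition of `[0, T]`. -/
lemma isQuasiUniformPartitionSeq_of_isTwoCoarsening {T : ℝ} (hT : 0 < T) {idx : ℕ → ℕ → ℕ}
    {M : ℕ → ℕ} (h : ∀ N, IsTwoCoarsening (idx (N + 1)) (M N) (N + 1)) :
    IsQuasiUniformPartitionSeq T M fun N j => eqPts T (N + 1) (idx (N + 1) j) where
  zero N := by rw [(h N).zero, eqPts_zero]
  last N := by rw [(h N).last, eqPts_self T N.succ_ne_zero]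
  lt_succ N n hn := by
    have := (h N).le_eqPts_sub hT.le hn
    have : 0 < T / (N + 1 : ℕ) := by positivity
    linarith
  le_two_mul N m hm n hn := by
    linarith [(h N).eqPts_sub_le hT.le hm, (h N).le_eqPts_sub hT.le hn]
  tendsto_mesh := by
    have hbound : Tendsto (fun N : ℕ => 2 * (T / (N + 1 : ℕ))) atTop (𝓝 0) := by
      simpa using ((tendsto_const_div_atTop_nhds_zero_nat T).comp
        (tendsto_add_atTop_nat 1)).const_mul 2
    refine squeeze_zero (fun N => Real.iSup_nonneg fun n => Real.iSup_nonneg fun hn => ?_)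
      (fun N => Real.iSup_le (fun n => Real.iSup_le (fun hn => ?_) ?_) ?_) hbound
    · exact (div_nonneg hT.le (Nat.cast_nonneg _)).trans
        ((h N).le_eqPts_sub hT.le (mem_range.1 hn))
    · exact (h N).eqPts_sub_le hT.le (mem_range.1 hn)
    all_goals positivity

/-- If `f(0) = 0`, `f` is continuous at the boundary, `f` has finite quadratic variation
`V²(f)` with respect to the equally-spaced partitions, and the quadratic variation of `f`
equals the same value `V²(f)` for every sequence of partitions of `[0,T]` that is quasi-uniform
with constant `C_qu ≤ 2` and whose mesh tends to `0`, then `σ̂_CV²(N) → V²(f)/T`. -/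
theorem cv_limit_quadratic_variation (T : ℝ) (hT : 0 < T) (f : ℝ → ℝ) (hf0 : f 0 = 0)
    (hbd0 : Tendsto f (nhdsWithin 0 (Set.Ioi 0)) (nhds (f 0)))
    (hbdT : Tendsto f (nhdsWithin T (Set.Iio T)) (nhds (f T)))
    (V2 : ℝ)
    (hqv : Tendsto
      (fun N : ℕ => ∑ n ∈ Finset.range N, (f (eqPts T N (n + 1)) - f (eqPts T N n)) ^ 2)
      atTop (nhds V2))
    (hqv' : ∀ (M : ℕ → ℕ) (q : ℕ → ℕ → ℝ),
      (∀ N, q N 0 = 0) → (∀ N, q N (M N) = T) →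
      (∀ N, ∀ n < M N, q N n < q N (n + 1)) →
      (∀ N, ∀ m < M N, ∀ n < M N, q N (m + 1) - q N m ≤ 2 * (q N (n + 1) - q N n)) →
      Tendsto (fun N => ⨆ n ∈ Finset.range (M N), (q N (n + 1) - q N n)) atTop (nhds 0) →
      Tendsto (fun N => ∑ n ∈ Finset.range (M N), (f (q N (n + 1)) - f (q N n)) ^ 2)
        atTop (nhds V2)) :
    Tendsto (fun N => sigmaCV (eqPts T) f N) atTop (nhds (V2 / T)) := by
  have hqv_seq {M : ℕ → ℕ} {q : ℕ → ℕ → ℝ} (h : IsQuasiUniformPartitionSeq T M q) :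
      Tendsto (fun N => qvSum f (q N) (M N)) atTop (𝓝 V2) :=
    hqv' M q h.zero h.last h.lt_succ h.le_two_mul h.tendsto_mesh
  have hqvE := hqv_seq <| isQuasiUniformPartitionSeq_of_isTwoCoarsening hT
    (idx := evenIdx) fun N => isTwoCoarsening_evenIdx (N + 1)
  have hqvO := hqv_seq <| isQuasiUniformPartitionSeq_of_isTwoCoarsening hT
    (idx := oddIdx) fun N => isTwoCoarsening_oddIdx N.succ_ne_zero
  have hfirst : Tendsto (fun N : ℕ => f (eqPts T (N + 1) 1)) atTop (𝓝 0) :=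
    hf0 ▸ hbd0.comp (tendsto_eqPts_succ_one hT)
  have hlast : Tendsto (fun N : ℕ => f (eqPts T (N + 1) (N + 1)) - f (eqPts T (N + 1) N))
      atTop (𝓝 0) := by
    simpa [eqPts_self] using
      (tendsto_const_nhds (x := f T)).sub (hbdT.comp (tendsto_eqPts_succ_self hT))
  rw [← tendsto_add_atTop_iff_nat 1] at hqv ⊢
  have hlim := ((hqv.const_mul 2).sub ((hfirst.pow 2).div_const 2)).sub
    ((hqvE.add hqvO).div_const 2) |>.add ((hlast.pow 2).div_const 2) |>.div_const T
  refine Tendsto.congr' ?_ (by convert hlim using 2; ring)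
  filter_upwards [eventually_ge_atTop 1] with N hN
  rw [sigmaCV, sigmaCVg_eqPts_eq_qvSum hT.ne' _ (by simp [eqPts_zero, hf0]) (by omega)]
  rfl
end

section
/- Suppose the partitions (P_N) are quasi-uniform and H ∈ (0,1). For l ∈ {0,1} and each N, let μ_N^{(l)} be the Gaussian measure on ℝ^N with mean zero and covariance matrix ( k_{l,H}(x_{N,i}, x_{N,j}) )_{i,j=1}^{N}. Then the expectation of σ̂_ICV²(N), regarded as a function of the data vector (f_1, …, f_N), under μ_N^{(l)} satisfies E σ̂_ICV²(N) = Θ(N^{1−2H}) if l = 0 and E σ̂_ICV²(N) = Θ(N^{−1−2H}) if l = 1. -/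
open Filter Asymptotics Finset MeasureTheory ProbabilityTheory

/-- Extension of a data vector `(f_1, …, f_N) ∈ ℝ^N` to indices `0, 1, …, N` with `f_0 = 0`. -/
def vecExt (N : ℕ) (v : Fin N → ℝ) (n : ℕ) : ℝ :=
  if h : 1 ≤ n ∧ n ≤ N then v ⟨n - 1, by omega⟩ else 0

/-- The interior cross-validation scale estimator `σ̂_ICV²(N)` as a function of the data vector
`(f_1, …, f_N) ∈ ℝ^N`. -/
noncomputable def sigmaICVvec (pts : ℕ → ℕ → ℝ) (N : ℕ) (v : Fin N → ℝ) : ℝ :=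
  (1 / (N : ℝ)) *
    ∑ n ∈ Finset.Icc 2 (N - 1),
      (deltaX pts N (n - 1) * (vecExt N v (n + 1) - vecExt N v n) -
          deltaX pts N n * (vecExt N v n - vecExt N v (n - 1))) ^ 2 /
        ((deltaX pts N n + deltaX pts N (n - 1)) * deltaX pts N n * deltaX pts N (n - 1))

/-- The fractional Brownian motion kernel `k_{0,H}`. -/
noncomputable def kFBM (H x y : ℝ) : ℝ := (x ^ (2 * H) + y ^ (2 * H) - |x - y| ^ (2 * H)) / 2

/-- The integrated fractional Brownian motion kernel `k_{1,H}`. -/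
noncomputable def kIFBM (H x y : ℝ) : ℝ :=
  (1 / (2 * (2 * H + 1))) *
    (y * x ^ (2 * H + 1) + x * y ^ (2 * H + 1) -
      (1 / (2 * (H + 1))) * (x ^ (2 * H + 2) + y ^ (2 * H + 2) - |x - y| ^ (2 * H + 2)))

/-!
Write `s = Δx_{n-1}`, `u = Δx_n`. The numerator of the `n`-th summand of `σ̂²_ICV` is the linear
statistic `u f_{n-1} - (u + s) f_n + s f_{n+1}` of the data, which is centred Gaussian, so the
expected summand is its variance divided by `(u + s) u s`. For both kernels this variance equals
`(u + s) u s · B(s, u)`, where `B` is a positive multiple of `±(s^γ + u^γ - (s + u)^γ)` with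
`γ = 2H - 1` for `k_{0,H}` and `γ = 2H + 1` for `k_{1,H}`. Since `γ ≠ 1`, this additivity defect of
`z ↦ z^γ` has a strict sign, so `B` is bounded above and away from `0` on every box `[a, b]²` with
`a > 0`; it is also homogeneous of degree `γ`. Quasi-uniformity puts every `Δx_{N,n}` within a fixed
factor of `T / N`, so every expected summand is `Θ(N^{-γ})`, and so is their average.
-/

open Real
open scoped NNReal

noncomputable def rpowDefect (γ s u : ℝ) : ℝ := s ^ γ + u ^ γ - (s + u) ^ γ

lemma rpow_eq_mul_rpow_sub_one {z : ℝ} (hz : 0 < z) (γ : ℝ) : z ^ γ = z * z ^ (γ - 1) := by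
  rw [rpow_sub_one hz.ne', mul_div_cancel₀ _ hz.ne']

lemma half_add_rpow {x y : ℝ} (hxy : 0 ≤ x + y) (γ : ℝ) :
    ((x + y) / 2) ^ (γ - 1) = 2 ^ (1 - γ) * (x + y) ^ (γ - 1) := by
  rw [div_rpow hxy zero_le_two, div_eq_mul_inv, ← rpow_neg zero_le_two, neg_sub, mul_comm]

section RpowDefect

variable {γ x y : ℝ}

-- Write `z ^ γ = z * z ^ (γ - 1)`, and compare `z ^ (γ - 1)` at `x ≤ (x + y) / 2` and `y ≤ x + y`.
lemma le_rpowDefect_of_le_one (hγ : γ ≤ 1) (hx : 0 < x) (hxy : x ≤ y) :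
    (2 ^ (1 - γ) - 1) * x * (x + y) ^ (γ - 1) ≤ rpowDefect γ x y := by
  have hy : 0 < y := hx.trans_le hxy
  have hx' : ((x + y) / 2) ^ (γ - 1) ≤ x ^ (γ - 1) :=
    rpow_le_rpow_of_nonpos hx (by linarith) (by linarith)
  have hy' : (x + y) ^ (γ - 1) ≤ y ^ (γ - 1) :=
    rpow_le_rpow_of_nonpos hy (by linarith) (by linarith)
  rw [half_add_rpow (by linarith)] at hx'
  rw [rpowDefect, rpow_eq_mul_rpow_sub_one hx γ, rpow_eq_mul_rpow_sub_one hy γ,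
    rpow_eq_mul_rpow_sub_one (add_pos hx hy) γ]
  nlinarith [mul_le_mul_of_nonneg_left hx' hx.le, mul_le_mul_of_nonneg_left hy' hy.le]

lemma rpowDefect_le_of_one_le (hγ : 1 ≤ γ) (hx : 0 < x) (hxy : x ≤ y) :
    rpowDefect γ x y ≤ (2 ^ (1 - γ) - 1) * x * (x + y) ^ (γ - 1) := by
  have hy : 0 < y := hx.trans_le hxy
  have hx' : x ^ (γ - 1) ≤ ((x + y) / 2) ^ (γ - 1) :=
    rpow_le_rpow hx.le (by linarith) (by linarith)
  have hy' : y ^ (γ - 1) ≤ (x + y) ^ (γ - 1) := rpow_le_rpow hy.le (by linarith) (by linarith)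
  rw [half_add_rpow (by linarith)] at hx'
  rw [rpowDefect, rpow_eq_mul_rpow_sub_one hx γ, rpow_eq_mul_rpow_sub_one hy γ,
    rpow_eq_mul_rpow_sub_one (add_pos hx hy) γ]
  nlinarith [mul_le_mul_of_nonneg_left hx' hx.le, mul_le_mul_of_nonneg_left hy' hy.le]

lemma rpowDefect_comm (γ s u : ℝ) : rpowDefect γ s u = rpowDefect γ u s := by
  simp only [rpowDefect, add_comm s u]; ring

lemma rpowDefect_mul {t s u : ℝ} (ht : 0 ≤ t) (hs : 0 ≤ s) (hu : 0 ≤ u) (γ : ℝ) :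
    rpowDefect γ (t * s) (t * u) = t ^ γ * rpowDefect γ s u := by
  simp only [rpowDefect, ← mul_add, mul_rpow ht hs, mul_rpow ht hu, mul_rpow ht (add_nonneg hs hu)]
  ring

lemma rpow_le_rpow_add_rpow_of_mem_Icc {a b z : ℝ} (ha : 0 < a) (hz : z ∈ Set.Icc a b) (γ : ℝ) :
    z ^ γ ≤ a ^ γ + b ^ γ := by
  rcases le_total 0 γ with hγ | hγ
  · linarith [rpow_le_rpow (ha.le.trans hz.1) hz.2 hγ, rpow_nonneg ha.le γ]
  · linarith [rpow_le_rpow_of_nonpos ha hz.1 hγ, rpow_nonneg (ha.le.trans (hz.1.trans hz.2)) γ]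

lemma exists_bounds_rpowDefect_of_lt_one (hγ : γ < 1) {a b : ℝ} (ha : 0 < a) (hab : a ≤ b) :
    ∃ c₁ > 0, ∃ c₂, ∀ s ∈ Set.Icc a b, ∀ u ∈ Set.Icc a b,
      c₁ ≤ rpowDefect γ s u ∧ rpowDefect γ s u ≤ c₂ := by
  have hc : 0 < (2 : ℝ) ^ (1 - γ) - 1 := sub_pos.2 (one_lt_rpow one_lt_two (by linarith))
  have hb : 0 < 2 * b := by linarith
  refine ⟨(2 ^ (1 - γ) - 1) * a * (2 * b) ^ (γ - 1), by positivity,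
    2 * (a ^ γ + b ^ γ), fun s hs u hu => ⟨?_, ?_⟩⟩
  · wlog hsu : s ≤ u generalizing s u
    · rw [rpowDefect_comm]; exact this u hu s hs (le_of_not_ge hsu)
    have hsum : (2 * b) ^ (γ - 1) ≤ (s + u) ^ (γ - 1) :=
      rpow_le_rpow_of_nonpos (by linarith [hs.1, hu.1]) (by linarith [hs.2, hu.2]) (by linarith)
    calc (2 ^ (1 - γ) - 1) * a * (2 * b) ^ (γ - 1)
        ≤ (2 ^ (1 - γ) - 1) * s * (s + u) ^ (γ - 1) :=
          mul_le_mul (by gcongr; exact hs.1) hsum (by positivity) (by nlinarith [hs.1])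
      _ ≤ rpowDefect γ s u := le_rpowDefect_of_le_one hγ.le (ha.trans_le hs.1) hsu
  · have := rpow_le_rpow_add_rpow_of_mem_Icc ha hs γ
    have := rpow_le_rpow_add_rpow_of_mem_Icc ha hu γ
    have := rpow_nonneg (by linarith [hs.1, hu.1] : 0 ≤ s + u) γ
    simp only [rpowDefect]; linarith

lemma exists_bounds_neg_rpowDefect_of_one_lt (hγ : 1 < γ) {a b : ℝ} (ha : 0 < a) :
    ∃ c₁ > 0, ∃ c₂, ∀ s ∈ Set.Icc a b, ∀ u ∈ Set.Icc a b,
      c₁ ≤ -rpowDefect γ s u ∧ -rpowDefect γ s u ≤ c₂ := by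
  have hc : 0 < 1 - (2 : ℝ) ^ (1 - γ) :=
    sub_pos.2 (rpow_lt_one_of_one_lt_of_neg one_lt_two (by linarith))
  refine ⟨(1 - 2 ^ (1 - γ)) * a * (2 * a) ^ (γ - 1), by positivity,
    (2 * b) ^ γ, fun s hs u hu => ⟨?_, ?_⟩⟩
  · wlog hsu : s ≤ u generalizing s u
    · rw [rpowDefect_comm]; exact this u hu s hs (le_of_not_ge hsu)
    have hsum : (2 * a) ^ (γ - 1) ≤ (s + u) ^ (γ - 1) :=
      rpow_le_rpow (by linarith) (by linarith [hs.1, hu.1]) (by linarith)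
    calc (1 - 2 ^ (1 - γ)) * a * (2 * a) ^ (γ - 1)
        ≤ (1 - 2 ^ (1 - γ)) * s * (s + u) ^ (γ - 1) :=
          mul_le_mul (by gcongr; exact hs.1) hsum (by positivity) (by nlinarith [hs.1])
      _ ≤ -rpowDefect γ s u := by
          linarith [rpowDefect_le_of_one_le hγ.le (ha.trans_le hs.1) hsu]
  · have hs0 : 0 ≤ s := ha.le.trans hs.1
    have hu0 : 0 ≤ u := ha.le.trans hu.1
    have := rpow_le_rpow (add_nonneg hs0 hu0) (by linarith [hs.2, hu.2] : s + u ≤ 2 * b)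
      (by linarith : 0 ≤ γ)
    have := rpow_nonneg hs0 γ
    have := rpow_nonneg hu0 γ
    simp only [rpowDefect]; linarith

end RpowDefect

-- The numerator of the `n`-th ICV summand is `u f_{n-1} - (u + s) f_n + s f_{n+1}`, where
-- `s = Δx_{n-1}` and `u = Δx_n`; its nodes are `p = x_{n-1}`, `p + s` and `p + s + u`.
def secondDiffCoeff (s u : ℝ) : Fin 3 → ℝ := ![u, -(u + s), s]

def secondDiffVar (K : ℝ → ℝ → ℝ) (p s u : ℝ) : ℝ :=
  let x : Fin 3 → ℝ := ![p, p + s, p + s + u]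
  ∑ k, ∑ l, secondDiffCoeff s u k * secondDiffCoeff s u l * K (x k) (x l)

lemma secondDiffVar_kFBM {H p s u : ℝ} (hH : 0 < H) (hs : 0 < s) (hu : 0 < u) :
    secondDiffVar (kFBM H) p s u = (u + s) * u * s * rpowDefect (2 * H - 1) s u := by
  have hsu : 0 < s + u := add_pos hs hu
  simp only [secondDiffVar, secondDiffCoeff, Fin.sum_univ_three, kFBM, rpowDefect,
    Matrix.cons_val_zero, Matrix.cons_val_one, Matrix.cons_val_two, Matrix.head_cons,
    Matrix.tail_cons]
  have e₁ : |p - (p + s)| = s := by rw [sub_add_cancel_left, abs_neg, abs_of_pos hs]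
  have e₂ : |p - (p + s + u)| = s + u := by
    rw [add_assoc, sub_add_cancel_left, abs_neg, abs_of_pos hsu]
  have e₃ : |p + s - (p + s + u)| = u := by rw [sub_add_cancel_left, abs_neg, abs_of_pos hu]
  rw [abs_sub_comm (p + s) p, abs_sub_comm (p + s + u) p, abs_sub_comm (p + s + u) (p + s),
    e₁, e₂, e₃]
  simp only [sub_self, abs_zero, zero_rpow (by positivity : 2 * H ≠ 0)]
  rw [rpow_eq_mul_rpow_sub_one hs (2 * H), rpow_eq_mul_rpow_sub_one hu (2 * H),
    rpow_eq_mul_rpow_sub_one hsu (2 * H)]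
  ring

lemma secondDiffVar_kIFBM {H p s u : ℝ} (hH : 0 < H) (hs : 0 < s) (hu : 0 < u) :
    secondDiffVar (kIFBM H) p s u =
      (u + s) * u * s * (-rpowDefect (2 * H + 1) s u / (2 * (2 * H + 1) * (H + 1))) := by
  have hsu : 0 < s + u := add_pos hs hu
  simp only [secondDiffVar, secondDiffCoeff, Fin.sum_univ_three, kIFBM, rpowDefect,
    Matrix.cons_val_zero, Matrix.cons_val_one, Matrix.cons_val_two, Matrix.head_cons,
    Matrix.tail_cons]
  have e₁ : |p - (p + s)| = s := by rw [sub_add_cancel_left, abs_neg, abs_of_pos hs]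
  have e₂ : |p - (p + s + u)| = s + u := by
    rw [add_assoc, sub_add_cancel_left, abs_neg, abs_of_pos hsu]
  have e₃ : |p + s - (p + s + u)| = u := by rw [sub_add_cancel_left, abs_neg, abs_of_pos hu]
  rw [abs_sub_comm (p + s) p, abs_sub_comm (p + s + u) p, abs_sub_comm (p + s + u) (p + s),
    e₁, e₂, e₃]
  simp only [sub_self, abs_zero, zero_rpow (by positivity : 2 * H + 2 ≠ 0)]
  rw [show 2 * H + 2 = 2 * H + 1 + 1 by ring, rpow_add_one hs.ne', rpow_add_one hu.ne',
    rpow_add_one hsu.ne']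
  field_simp
  ring

lemma integral_sq_of_map_eq_gaussianReal {E : Type*} [MeasurableSpace E] {μ : Measure E}
    {L : E → ℝ} (hL : Measurable L) {V : ℝ≥0} (h : μ.map L = gaussianReal 0 V) :
    Integrable (fun x => L x ^ 2) μ ∧ ∫ x, L x ^ 2 ∂μ = V := by
  have hsq : AEStronglyMeasurable (fun y : ℝ => y ^ 2) (μ.map L) := by fun_prop
  refine ⟨(integrable_map_measure hsq hL.aemeasurable).1 ?_, ?_⟩
  · rw [h]; exact (memLp_id_gaussianReal 2).integrable_sq
  · rw [← integral_map hL.aemeasurable hsq, h, ← variance_id_gaussianReal (μ := 0) (v := V),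
      variance_of_integral_eq_zero aemeasurable_id integral_id_gaussianReal]
    rfl

section PushForward

variable {m n : Type*} [Fintype m] [Fintype n] [DecidableEq n] (ι : m → n) (c : m → ℝ)

lemma sum_pi_single_mul (v : n → ℝ) :
    ∑ i, (∑ k, (Pi.single (ι k) (c k) : n → ℝ)) i * v i = ∑ k, c k * v (ι k) := by
  simp only [Finset.sum_apply, Finset.sum_mul]
  rw [Finset.sum_comm]
  simp [Pi.single_apply]

lemma sum_sum_pi_single_mul (F : n → n → ℝ) :
    ∑ i, ∑ j, (∑ k, (Pi.single (ι k) (c k) : n → ℝ)) i *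
      (∑ k, (Pi.single (ι k) (c k) : n → ℝ)) j * F i j =
      ∑ k, ∑ l, c k * c l * F (ι k) (ι l) := by
  simp only [mul_assoc, ← Finset.mul_sum, sum_pi_single_mul]

end PushForward

noncomputable def icvSummand (pts : ℕ → ℕ → ℝ) (N n : ℕ) (v : Fin N → ℝ) : ℝ :=
  (deltaX pts N (n - 1) * (vecExt N v (n + 1) - vecExt N v n) -
      deltaX pts N n * (vecExt N v n - vecExt N v (n - 1))) ^ 2 /
    ((deltaX pts N n + deltaX pts N (n - 1)) * deltaX pts N n * deltaX pts N (n - 1))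

lemma integral_icvSummand {pts : ℕ → ℕ → ℝ} {K : ℝ → ℝ → ℝ} {N : ℕ} {μ : Measure (Fin N → ℝ)}
    (hgauss : ∀ a : Fin N → ℝ, μ.map (fun v => ∑ i, a i * v i) =
      gaussianReal 0 (Real.toNNReal
        (∑ i, ∑ j, a i * a j * K (pts N (i.1 + 1)) (pts N (j.1 + 1)))))
    {n : ℕ} (hn : n ∈ Finset.Icc 2 (N - 1)) :
    Integrable (icvSummand pts N n) μ ∧
      ∫ v, icvSummand pts N n v ∂μ =
        (secondDiffVar K (pts N (n - 1)) (deltaX pts N (n - 1)) (deltaX pts N n)).toNNReal /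
          ((deltaX pts N n + deltaX pts N (n - 1)) * deltaX pts N n * deltaX pts N (n - 1)) := by
  obtain ⟨hn₂, hnN⟩ := Finset.mem_Icc.mp hn
  set s := deltaX pts N (n - 1)
  set u := deltaX pts N n
  -- the data vector is `(f_1, …, f_N)`, so `f_{n-1+k}` sits at index `n - 2 + k` of `Fin N`
  let ι : Fin 3 → Fin N := fun k => ⟨n - 2 + k, by omega⟩
  let a : Fin N → ℝ := ∑ k, Pi.single (ι k) (secondDiffCoeff s u k)
  have hnum : ∀ v, s * (vecExt N v (n + 1) - vecExt N v n) -
      u * (vecExt N v n - vecExt N v (n - 1)) = ∑ i, a i * v i := by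
    intro v
    have hv : ∀ k : Fin 3, vecExt N v (n - 1 + k) = v (ι k) := fun k => by
      rw [vecExt, dif_pos (by omega)]
      congr 1
      ext
      simp only [ι]
      omega
    rw [sum_pi_single_mul, Fin.sum_univ_three, ← hv 0, ← hv 1, ← hv 2]
    simp only [secondDiffCoeff, Matrix.cons_val_zero, Matrix.cons_val_one, Matrix.cons_val_two,
      Matrix.head_cons, Matrix.tail_cons, Fin.val_zero, Fin.val_one, Fin.val_two, add_zero,
      show n - 1 + 1 = n by omega, show n - 1 + 2 = n + 1 by omega]
    ring
  have hvar : ∑ i, ∑ j, a i * a j * K (pts N (i.1 + 1)) (pts N (j.1 + 1)) =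
      secondDiffVar K (pts N (n - 1)) s u := by
    have hx : ∀ k : Fin 3,
        pts N ((ι k).1 + 1) = ![pts N (n - 1), pts N (n - 1) + s, pts N (n - 1) + s + u] k := by
      have h₁ : n - 2 + 1 = n - 1 := by omega
      have h₂ : n - 2 + 2 = n := by omega
      have h₃ : n - 1 + 1 = n := by omega
      intro k
      fin_cases k <;> simp [ι, s, u, deltaX, h₁, h₂, h₃]
    rw [sum_sum_pi_single_mul]
    simp only [hx]
    rfl
  obtain ⟨hint, hval⟩ :=
    integral_sq_of_map_eq_gaussianReal (by fun_prop) ((hgauss a).trans (by rw [hvar]))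
  have hsummand : icvSummand pts N n = fun v => (∑ i, a i * v i) ^ 2 / ((u + s) * u * s) :=
    funext fun v => by rw [icvSummand, hnum]
  rw [hsummand]
  exact ⟨hint.div_const _, by rw [integral_div, hval]⟩

lemma integral_sigmaICVvec {pts : ℕ → ℕ → ℝ} {K : ℝ → ℝ → ℝ} {N : ℕ} {μ : Measure (Fin N → ℝ)}
    (hgauss : ∀ a : Fin N → ℝ, μ.map (fun v => ∑ i, a i * v i) =
      gaussianReal 0 (Real.toNNReal
        (∑ i, ∑ j, a i * a j * K (pts N (i.1 + 1)) (pts N (j.1 + 1))))) :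
    ∫ v, sigmaICVvec pts N v ∂μ = 1 / (N : ℝ) * ∑ n ∈ Finset.Icc 2 (N - 1),
      (secondDiffVar K (pts N (n - 1)) (deltaX pts N (n - 1)) (deltaX pts N n)).toNNReal /
        ((deltaX pts N n + deltaX pts N (n - 1)) * deltaX pts N n * deltaX pts N (n - 1)) := by
  change ∫ v, 1 / (N : ℝ) * ∑ n ∈ Finset.Icc 2 (N - 1), icvSummand pts N n v ∂μ = _
  rw [integral_const_mul, integral_finsetSum _ fun n hn => (integral_icvSummand hgauss hn).1]
  exact congrArg _ (Finset.sum_congr rfl fun n hn => (integral_icvSummand hgauss hn).2)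

lemma sum_range_deltaX (pts : ℕ → ℕ → ℝ) (N : ℕ) :
    ∑ m ∈ Finset.range N, deltaX pts N m = pts N N - pts N 0 :=
  Finset.sum_range_sub (pts N) N

lemma deltaX_comparable_mean {pts : ℕ → ℕ → ℝ} {N : ℕ} {C : ℝ}
    (hC : ∀ m < N, ∀ n < N, deltaX pts N m ≤ C * deltaX pts N n) {n : ℕ} (hn : n < N) :
    (pts N N - pts N 0) / N ≤ C * deltaX pts N n ∧
      deltaX pts N n ≤ C * ((pts N N - pts N 0) / N) := by
  have hN : (0 : ℝ) < N := Nat.cast_pos.2 (Nat.zero_lt_of_lt hn)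
  rw [← sum_range_deltaX, div_le_iff₀ hN, mul_div_assoc', le_div_iff₀ hN, Finset.mul_sum]
  constructor
  · calc ∑ m ∈ Finset.range N, deltaX pts N m
        ≤ ∑ m ∈ Finset.range N, C * deltaX pts N n :=
          Finset.sum_le_sum fun m hm => hC m (Finset.mem_range.1 hm) n hn
      _ = C * deltaX pts N n * N := by simp [mul_comm]
  · calc deltaX pts N n * N = ∑ m ∈ Finset.range N, deltaX pts N n := by simp [mul_comm]
      _ ≤ ∑ m ∈ Finset.range N, C * deltaX pts N m :=
          Finset.sum_le_sum fun m hm => hC n hn m (Finset.mem_range.1 hm)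

lemma isTheta_of_bounds {α : Type*} {l : Filter α} {f g : α → ℝ} {c₁ c₂ : ℝ} (hc₁ : 0 < c₁)
    (h : ∀ᶠ x in l, 0 ≤ g x ∧ c₁ * g x ≤ f x ∧ f x ≤ c₂ * g x) : f =Θ[l] g := by
  refine ⟨IsBigO.of_bound c₂ ?_, IsBigO.of_bound c₁⁻¹ ?_⟩ <;>
    filter_upwards [h] with x ⟨hg, hlo, hhi⟩ <;>
    rw [Real.norm_of_nonneg hg, Real.norm_of_nonneg ((mul_nonneg hc₁.le hg).trans hlo)]
  · exact hhi
  · rwa [le_inv_mul_iff₀ hc₁]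

lemma isTheta_average_Icc {g : ℕ → ℕ → ℝ} {e c₁ c₂ : ℝ} (hc₁ : 0 < c₁)
    (hg : ∀ N : ℕ, ∀ n ∈ Finset.Icc 2 (N - 1),
      c₁ * (N : ℝ) ^ e ≤ g N n ∧ g N n ≤ c₂ * (N : ℝ) ^ e) :
    (fun N : ℕ => 1 / (N : ℝ) * ∑ n ∈ Finset.Icc 2 (N - 1), g N n) =Θ[atTop]
      fun N => (N : ℝ) ^ e := by
  refine isTheta_of_bounds (c₁ := c₁ / 3) (c₂ := |c₂|) (by positivity) ?_
  filter_upwards [eventually_ge_atTop 3] with N hN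
  have hN : (3 : ℝ) ≤ N := by exact_mod_cast hN
  have hpow : 0 ≤ (N : ℝ) ^ e := by positivity
  have hcard : ((Finset.Icc 2 (N - 1)).card : ℝ) = N - 2 := by
    rw [Nat.card_Icc, Nat.cast_sub (by omega)]
    push_cast [Nat.cast_sub (by omega : 1 ≤ N)]
    ring
  have hlo := Finset.card_nsmul_le_sum _ _ _ fun n hn => (hg N n hn).1
  have hhi := Finset.sum_le_card_nsmul _ _ _ fun n hn => (hg N n hn).2
  rw [nsmul_eq_mul, hcard] at hlo hhi
  refine ⟨hpow, ?_, ?_⟩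
  · rw [one_div_mul_eq_div, le_div_iff₀ (by linarith)]
    nlinarith [mul_nonneg hc₁.le hpow]
  · rw [one_div_mul_eq_div, div_le_iff₀ (by linarith)]
    calc _ ≤ (N - 2) * (c₂ * (N : ℝ) ^ e) := hhi
      _ ≤ (N - 2) * (|c₂| * (N : ℝ) ^ e) :=
          mul_le_mul_of_nonneg_left (by gcongr; exact le_abs_self c₂) (by linarith)
      _ ≤ |c₂| * (N : ℝ) ^ e * N := by nlinarith [mul_nonneg (abs_nonneg c₂) hpow]

lemma bounds_of_homogeneous {B : ℝ → ℝ → ℝ} {γ : ℝ}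
    (hhom : ∀ t s u, 0 < t → 0 < s → 0 < u → B (t * s) (t * u) = t ^ γ * B s u)
    {C c₁ c₂ : ℝ} (hC : 0 < C)
    (hbox : ∀ s ∈ Set.Icc C⁻¹ C, ∀ u ∈ Set.Icc C⁻¹ C, c₁ ≤ B s u ∧ B s u ≤ c₂)
    {t s u : ℝ} (ht : 0 < t) (hs : t ≤ C * s ∧ s ≤ C * t) (hu : t ≤ C * u ∧ u ≤ C * t) :
    c₁ * t ^ γ ≤ B s u ∧ B s u ≤ c₂ * t ^ γ := by
  have hscaled : ∀ {x}, t ≤ C * x ∧ x ≤ C * t → x / t ∈ Set.Icc C⁻¹ C := fun {x} hx =>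
    ⟨by rw [inv_le_iff_one_le_mul₀ hC, div_mul_eq_mul_div, one_le_div ht, mul_comm]; exact hx.1,
      div_le_of_le_mul₀ ht.le hC.le hx.2⟩
  have hpos : ∀ {x}, t ≤ C * x ∧ x ≤ C * t → 0 < x / t := fun hx =>
    (inv_pos.2 hC).trans_le (hscaled hx).1
  have := hbox _ (hscaled hs) _ (hscaled hu)
  rw [← mul_div_cancel₀ s ht.ne', ← mul_div_cancel₀ u ht.ne', hhom t _ _ ht (hpos hs) (hpos hu)]
  have htγ : 0 < t ^ γ := rpow_pos_of_pos ht γ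
  constructor <;> nlinarith

theorem isTheta_integral_sigmaICVvec {T γ : ℝ} (hT : 0 < T) {pts : ℕ → ℕ → ℝ}
    (hx0 : ∀ N, pts N 0 = 0) (hxT : ∀ N, pts N N = T)
    (hmono : ∀ N, ∀ n < N, pts N n < pts N (n + 1))
    (hqu : ∃ C : ℝ, ∀ N, ∀ m < N, ∀ n < N, deltaX pts N m ≤ C * deltaX pts N n)
    {K : ℝ → ℝ → ℝ} {μ : (N : ℕ) → Measure (Fin N → ℝ)}
    (hgauss : ∀ (N : ℕ) (a : Fin N → ℝ),
      (μ N).map (fun v => ∑ i, a i * v i) =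
        gaussianReal 0 (Real.toNNReal
          (∑ i, ∑ j, a i * a j * K (pts N (i.1 + 1)) (pts N (j.1 + 1)))))
    {B : ℝ → ℝ → ℝ}
    (hvar : ∀ p s u, 0 < s → 0 < u → secondDiffVar K p s u = (u + s) * u * s * B s u)
    (hhom : ∀ t s u, 0 < t → 0 < s → 0 < u → B (t * s) (t * u) = t ^ γ * B s u)
    (hbox : ∀ a b, 0 < a → a ≤ b → ∃ c₁ > 0, ∃ c₂, ∀ s ∈ Set.Icc a b, ∀ u ∈ Set.Icc a b,
      c₁ ≤ B s u ∧ B s u ≤ c₂) :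
    (fun N => ∫ v, sigmaICVvec pts N v ∂(μ N)) =Θ[atTop] fun N : ℕ => (N : ℝ) ^ (-γ) := by
  obtain ⟨C, hC⟩ := hqu
  have hΔ : ∀ {N n}, n < N → 0 < deltaX pts N n := fun hn => sub_pos.2 (hmono _ _ hn)
  have hC1 : 1 ≤ C := by
    simpa using (le_mul_iff_one_le_left (hΔ zero_lt_one)).1 (hC 1 0 zero_lt_one 0 zero_lt_one)
  have hC0 : 0 < C := one_pos.trans_le hC1
  obtain ⟨c₁, hc₁, c₂, hc⟩ := hbox C⁻¹ C (inv_pos.2 hC0) ((inv_le_one_of_one_le₀ hC1).trans hC1)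
  have hterm : ∀ N : ℕ, ∀ n ∈ Finset.Icc 2 (N - 1),
      c₁ * T ^ γ * (N : ℝ) ^ (-γ) ≤ B (deltaX pts N (n - 1)) (deltaX pts N n) ∧
        B (deltaX pts N (n - 1)) (deltaX pts N n) ≤ c₂ * T ^ γ * (N : ℝ) ^ (-γ) := by
    intro N n hn
    obtain ⟨hn₂, hnN⟩ := Finset.mem_Icc.1 hn
    have hN : (0 : ℝ) < N := by exact_mod_cast (show 0 < N by omega)
    have hmean : ∀ m < N, T / N ≤ C * deltaX pts N m ∧ deltaX pts N m ≤ C * (T / N) := by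
      simpa only [hx0, hxT, sub_zero] using fun m => deltaX_comparable_mean (hC N) (n := m)
    have hTN : (T / N) ^ γ = T ^ γ * (N : ℝ) ^ (-γ) := by
      rw [div_rpow hT.le hN.le, rpow_neg hN.le, div_eq_mul_inv]
    simpa only [hTN, mul_assoc] using bounds_of_homogeneous hhom hC0 hc (div_pos hT hN)
      (hmean (n - 1) (by omega)) (hmean n (by omega))
  have hint : ∀ N : ℕ, ∫ v, sigmaICVvec pts N v ∂(μ N) =
      1 / (N : ℝ) * ∑ n ∈ Finset.Icc 2 (N - 1), B (deltaX pts N (n - 1)) (deltaX pts N n) := by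
    intro N
    rw [integral_sigmaICVvec (hgauss N)]
    refine congrArg _ (Finset.sum_congr rfl fun n hn => ?_)
    obtain ⟨hn₂, hnN⟩ := Finset.mem_Icc.1 hn
    have hs := hΔ (N := N) (n := n - 1) (by omega)
    have hu := hΔ (N := N) (n := n) (by omega)
    have hB : 0 ≤ B (deltaX pts N (n - 1)) (deltaX pts N n) :=
      (by positivity : 0 ≤ c₁ * T ^ γ * (N : ℝ) ^ (-γ)).trans (hterm N n hn).1
    rw [hvar _ _ _ hs hu, Real.coe_toNNReal _ (by positivity),
      mul_div_cancel_left₀ _ (by positivity)]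
  simp only [hint]
  exact isTheta_average_Icc (by positivity) hterm

theorem icv_expected_rate_general (T : ℝ) (hT : 0 < T) (pts : ℕ → ℕ → ℝ)
    (hx0 : ∀ N, pts N 0 = 0) (hxT : ∀ N, pts N N = T)
    (hmono : ∀ N, ∀ n < N, pts N n < pts N (n + 1))
    (hqu : ∃ C : ℝ, ∀ N, ∀ m < N, ∀ n < N, deltaX pts N m ≤ C * deltaX pts N n)
    (H : ℝ) (hH0 : 0 < H) (hH1 : H < 1)
    (l : ℕ)
    (K : ℝ → ℝ → ℝ) (hK : K = if l = 0 then kFBM H else kIFBM H)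
    (μ : (N : ℕ) → Measure (Fin N → ℝ))
    (hgauss : ∀ (N : ℕ) (a : Fin N → ℝ),
      (μ N).map (fun v => ∑ i, a i * v i) =
        gaussianReal 0 (Real.toNNReal
          (∑ i, ∑ j, a i * a j * K (pts N (i.1 + 1)) (pts N (j.1 + 1))))) :
    (l = 0 →
      (fun N => ∫ v, sigmaICVvec pts N v ∂(μ N)) =Θ[atTop]
        fun N : ℕ => (N : ℝ) ^ (1 - 2 * H)) ∧
    (l = 1 →
      (fun N => ∫ v, sigmaICVvec pts N v ∂(μ N)) =Θ[atTop]
        fun N : ℕ => (N : ℝ) ^ (-1 - 2 * H)) := by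
  refine ⟨fun hl0 => ?_, fun hl1 => ?_⟩
  · rw [if_pos hl0] at hK
    subst hK
    rw [show 1 - 2 * H = -(2 * H - 1) by ring]
    exact isTheta_integral_sigmaICVvec hT hx0 hxT hmono hqu hgauss
      (fun p s u hs hu => secondDiffVar_kFBM hH0 hs hu)
      (fun t s u ht hs hu => rpowDefect_mul ht.le hs.le hu.le _)
      (fun a b ha hab => exists_bounds_rpowDefect_of_lt_one (by linarith) ha hab)
  · rw [if_neg (by omega)] at hK
    subst hK
    rw [show -1 - 2 * H = -(2 * H + 1) by ring]
    refine isTheta_integral_sigmaICVvec hT hx0 hxT hmono hqu hgauss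
      (fun p s u hs hu => secondDiffVar_kIFBM hH0 hs hu)
      (fun t s u ht hs hu => by rw [rpowDefect_mul ht.le hs.le hu.le]; ring)
      (fun a b ha _ => ?_)
    obtain ⟨c₁, hc₁, c₂, hc⟩ :=
      exists_bounds_neg_rpowDefect_of_one_lt (b := b) (by linarith : 1 < 2 * H + 1) ha
    have hd : 0 < 2 * (2 * H + 1) * (H + 1) := by positivity
    exact ⟨c₁ / (2 * (2 * H + 1) * (H + 1)), by positivity, c₂ / (2 * (2 * H + 1) * (H + 1)),
      fun s hs u hu => ⟨by gcongr; exact (hc s hs u hu).1, by gcongr; exact (hc s hs u hu).2⟩⟩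

/-- If the partitions are quasi-uniform, `H ∈ (0,1)`, `l ∈ {0,1}` and `μ_N` is the Gaussian
measure on `ℝ^N` with mean zero and covariance matrix `(k_{l,H}(x_{N,i}, x_{N,j}))_{i,j=1}^N`,
then `E σ̂_ICV²(N) = Θ(N^{1-2H})` if `l = 0` and `E σ̂_ICV²(N) = Θ(N^{-1-2H})` if `l = 1`. -/
theorem icv_expected_rate (T : ℝ) (hT : 0 < T) (pts : ℕ → ℕ → ℝ)
    (hx0 : ∀ N, pts N 0 = 0) (hxT : ∀ N, pts N N = T)
    (hmono : ∀ N, ∀ n < N, pts N n < pts N (n + 1))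
    (hqu : ∃ C : ℝ, ∀ N, ∀ m < N, ∀ n < N, deltaX pts N m ≤ C * deltaX pts N n)
    (H : ℝ) (hH0 : 0 < H) (hH1 : H < 1)
    (l : ℕ) (hl : l = 0 ∨ l = 1)
    (K : ℝ → ℝ → ℝ) (hK : K = if l = 0 then kFBM H else kIFBM H)
    (μ : (N : ℕ) → Measure (Fin N → ℝ))
    (hgauss : ∀ (N : ℕ) (a : Fin N → ℝ),
      (μ N).map (fun v => ∑ i, a i * v i) =
        gaussianReal 0 (Real.toNNReal
          (∑ i, ∑ j, a i * a j * K (pts N (i.1 + 1)) (pts N (j.1 + 1))))) :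
    (l = 0 →
      (fun N => ∫ v, sigmaICVvec pts N v ∂(μ N)) =Θ[atTop]
        fun N : ℕ => (N : ℝ) ^ (1 - 2 * H)) ∧
    (l = 1 →
      (fun N => ∫ v, sigmaICVvec pts N v ∂(μ N)) =Θ[atTop]
        fun N : ℕ => (N : ℝ) ^ (-1 - 2 * H)) :=
  icv_expected_rate_general T hT pts hx0 hxT hmono hqu H hH0 hH1 l K hK μ hgauss
end

section
/- Let 0 < x_1 < x_2 < ⋯ < x_N be real numbers, set x_0 = 0, and let K ∈ ℝ^{N×N} have entries K_{ij} = min(x_i, x_j). Then for every v ∈ ℝ^N, with the convention v_0 = 0, vᵀ K⁻¹ v = Σ_{n=1}^{N} (v_n − v_{n−1})² / (x_n − x_{n−1}). -/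
/-!
Writing `d k = x (k + 1) - x k`, one has `min (x (i + 1)) (x (j + 1)) = ∑_{k ≤ min i j} d k`, i.e.
`K = L D Lᵀ` with `L` the lower-triangular all-ones matrix (the prefix-sum operator) and
`D = diagonal d`. The data vector is `L` applied to the increments `Δv k = v (k + 1) - v k`, so
`vᵀ K⁻¹ v = Δvᵀ Lᵀ (Lᵀ)⁻¹ D⁻¹ L⁻¹ L Δv = Δvᵀ D⁻¹ Δv`.
-/

open Matrix
/-- The Gram matrix of the Brownian motion kernel `k(x,y) = min(x,y)` at points
`x_1 < ⋯ < x_N` (here `x (i+1)` is the `i`-th point, `0`-indexed). -/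
noncomputable def gramBM (N : ℕ) (x : ℕ → ℝ) : Matrix (Fin N) (Fin N) ℝ :=
  Matrix.of fun i j => min (x (i.1 + 1)) (x (j.1 + 1))

namespace Matrix

theorem dotProduct_mulVec_inv_mul_diagonal_mul_transpose {n K : Type*} [Fintype n]
    [DecidableEq n] [Field K] (L : Matrix n n K) (hL : IsUnit L.det) (d : n → K)
    (hd : ∀ i, d i ≠ 0) (w : n → K) :
    L *ᵥ w ⬝ᵥ (L * diagonal d * Lᵀ)⁻¹ *ᵥ (L *ᵥ w) = ∑ i, w i ^ 2 / d i := by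
  have hLt : IsUnit Lᵀ.det := by rwa [det_transpose]
  have hD : (diagonal d)⁻¹ = diagonal d⁻¹ := inv_eq_left_inv <| by
    rw [diagonal_mul_diagonal, ← diagonal_one]
    exact congrArg diagonal (funext fun i => inv_mul_cancel₀ (hd i))
  have hcancel : Lᵀ * (L * diagonal d * Lᵀ)⁻¹ * L = diagonal d⁻¹ := by
    rw [mul_inv_rev, mul_inv_rev, hD, ← mul_assoc, ← mul_assoc,
      mul_nonsing_inv _ hLt, one_mul, mul_assoc, nonsing_inv_mul _ hL, mul_one]
  calc L *ᵥ w ⬝ᵥ (L * diagonal d * Lᵀ)⁻¹ *ᵥ (L *ᵥ w)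
      = w ⬝ᵥ (Lᵀ * (L * diagonal d * Lᵀ)⁻¹ * L) *ᵥ w := by
        rw [mulVec_mulVec, dotProduct_mulVec, ← vecMul_transpose, vecMul_vecMul,
          ← dotProduct_mulVec, ← Matrix.mul_assoc]
    _ = ∑ i, w i ^ 2 / d i := by
        rw [hcancel]
        simp only [dotProduct, mulVec_diagonal, Pi.inv_apply]
        exact Finset.sum_congr rfl fun i _ => by field_simp

section PrefixSum

variable (ι R : Type*) [LinearOrder ι]

def prefixSumMatrix [Zero R] [One R] : Matrix ι ι R :=
  of fun i j => if j ≤ i then 1 else 0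

theorem det_prefixSumMatrix [Fintype ι] [CommRing R] : (prefixSumMatrix ι R).det = 1 := by
  have hlower : (prefixSumMatrix ι R).IsLowerTriangular := fun i j hij =>
    if_neg (not_le.2 (OrderDual.toDual_lt_toDual.1 hij))
  rw [det_of_isLowerTriangular _ hlower]
  simp [prefixSumMatrix]

variable {ι R}

theorem prefixSumMatrix_mul_diagonal_mul_transpose [Fintype ι] [NonAssocSemiring R] (d : ι → R) :
    prefixSumMatrix ι R * diagonal d * (prefixSumMatrix ι R)ᵀ =
      of fun i j => (prefixSumMatrix ι R *ᵥ d) (min i j) := by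
  ext i j
  rw [mul_apply]
  simp only [mul_diagonal, transpose_apply, prefixSumMatrix, of_apply, mulVec, dotProduct,
    le_min_iff, ite_mul, mul_ite, one_mul, zero_mul, mul_one, mul_zero, ← ite_and, and_comm]

theorem prefixSumMatrix_mulVec_apply [Fintype ι] [LocallyFiniteOrderBot ι] [NonAssocSemiring R]
    (w : ι → R) (i : ι) : (prefixSumMatrix ι R *ᵥ w) i = ∑ k ∈ Finset.Iic i, w k := by
  simp [mulVec, dotProduct, prefixSumMatrix, ite_mul, Finset.sum_ite, Finset.filter_ge_eq_Iic]

theorem prefixSumMatrix_mulVec_sub [Ring R] {n : ℕ} (f : ℕ → R) (i : Fin n) :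
    (prefixSumMatrix (Fin n) R *ᵥ fun k => f (k + 1) - f k) i = f (i + 1) - f 0 :=
  (prefixSumMatrix_mulVec_apply _ i).trans (Fin.sum_Iic_sub i fun k => f k :)

end PrefixSum

end Matrix

theorem gramBM_eq_prefixSumMatrix_mul_diagonal_mul_transpose (N : ℕ) (x : ℕ → ℝ)
    (hx0 : x 0 = 0) (hmono : ∀ n < N, x n ≤ x (n + 1)) :
    gramBM N x = prefixSumMatrix (Fin N) ℝ * diagonal (fun k : Fin N => x (k + 1) - x k) *
      (prefixSumMatrix (Fin N) ℝ)ᵀ := by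
  have hx : Monotone fun i : Fin (N + 1) => x i := Fin.monotone_iff_le_succ.2 fun i => hmono i i.2
  have hx' : Monotone fun i : Fin N => x (i + 1) := hx.comp Fin.strictMono_succ.monotone
  rw [prefixSumMatrix_mul_diagonal_mul_transpose]
  ext i j
  rw [gramBM, of_apply, of_apply, prefixSumMatrix_mulVec_sub, hx0, sub_zero]
  exact hx'.map_min.symm

/-- For `0 = x_0 < x_1 < ⋯ < x_N` and any `v ∈ ℝ^N` (here represented by `v : ℕ → ℝ` with the
convention `v 0 = 0`, the data vector being `(v 1, …, v N)`),
`vᵀ K⁻¹ v = Σ_{n=1}^{N} (v_n − v_{n−1})²/(x_n − x_{n−1})`. -/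
theorem quadratic_form_gramBM_inv (N : ℕ) (x : ℕ → ℝ) (hx0 : x 0 = 0)
    (hmono : ∀ n < N, x n < x (n + 1)) (v : ℕ → ℝ) (hv0 : v 0 = 0) :
    (fun i : Fin N => v (i.1 + 1)) ⬝ᵥ
        (gramBM N x)⁻¹.mulVec (fun i : Fin N => v (i.1 + 1)) =
      ∑ n ∈ Finset.range N, (v (n + 1) - v n) ^ 2 / (x (n + 1) - x n) := by
  have hv : (fun i : Fin N => v (i.1 + 1)) =
      prefixSumMatrix (Fin N) ℝ *ᵥ fun k => v (k + 1) - v k := by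
    funext i
    rw [prefixSumMatrix_mulVec_sub, hv0, sub_zero]
  rw [gramBM_eq_prefixSumMatrix_mul_diagonal_mul_transpose N x hx0 fun n hn => (hmono n hn).le,
    hv, dotProduct_mulVec_inv_mul_diagonal_mul_transpose _ (by simp [det_prefixSumMatrix]) _
      fun k : Fin N => sub_ne_zero.2 (hmono k k.2).ne']
  exact Fin.sum_univ_eq_sum_range (fun n => (v (n + 1) - v n) ^ 2 / (x (n + 1) - x n)) N
end

section
/- Let 0 < x_1 < x_2 < ⋯ < x_N ≤ T, set x_0 = 0, let K ∈ ℝ^{N×N} have entries K_{ij} = min(x_i, x_j), and for x ∈ [0,T] let κ(x) ∈ ℝ^N have entries κ(x)_i = min(x, x_i). Then for every v ∈ ℝ^N (with convention v_0 = 0): (a) if x ∈ [x_{m−1}, x_m] for some 1 ≤ m ≤ N, then κ(x)ᵀ K⁻¹ v = ((x_m − x)v_{m−1} + (x − x_{m−1})v_m)/(x_m − x_{m−1}) and min(x,x) − κ(x)ᵀ K⁻¹ κ(x) = (x_m − x)(x − x_{m−1})/(x_m − x_{m−1}); (b) if x ∈ [x_N, T], then κ(x)ᵀ K⁻¹ v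 = v_N and x − κ(x)ᵀ K⁻¹ κ(x) = x − x_N. -/
open Matrix

/-- The kernel vector `κ(t)_i = min(t, x_i)`, `i = 1, …, N`. -/
noncomputable def kappaBM (N : ℕ) (x : ℕ → ℝ) (t : ℝ) : Fin N → ℝ :=
  fun i => min t (x (i.1 + 1))

def Matrix.lowerOnes (n R : Type*) [LE n] [DecidableLE n] [Zero R] [One R] : Matrix n n R :=
  of fun i j => if j ≤ i then 1 else 0

theorem Matrix.det_lowerOnes {n R : Type*} [Fintype n] [LinearOrder n] [CommRing R] :
    (lowerOnes n R).det = 1 := by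
  rw [det_of_isLowerTriangular]
  · simp [lowerOnes]
  · intro i j hij
    simp [lowerOnes, (OrderDual.toDual_lt_toDual.1 hij).not_ge]

theorem Matrix.IsSymm.dotProduct_inv_mulVec_of_mulVec_eq {n R : Type*} [Fintype n]
    [DecidableEq n] [CommRing R] {A : Matrix n n R} (hA : A.IsSymm) (hdet : IsUnit A.det)
    {w b : n → R} (hw : A *ᵥ w = b) (u : n → R) : b ⬝ᵥ A⁻¹ *ᵥ u = w ⬝ᵥ u := by
  rw [← hw, ← vecMul_transpose, hA.eq, ← dotProduct_mulVec, mulVec_mulVec,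
    mul_nonsing_inv _ hdet, one_mulVec]

theorem sub_mul_min_eq_of_le_or_le {R : Type*} [CommRing R] [LinearOrder R] {p q t c : R}
    (hpt : p ≤ t) (htq : t ≤ q) (hc : c ≤ p ∨ q ≤ c) :
    (q - p) * min t c = (q - t) * min p c + (t - p) * min q c := by
  rcases hc with hc | hc
  · rw [min_eq_right (hc.trans hpt), min_eq_right hc, min_eq_right (hc.trans (hpt.trans htq))]
    ring
  · rw [min_eq_left (htq.trans hc), min_eq_left ((hpt.trans htq).trans hc), min_eq_left hc]
    ring

section BrownianMotion

variable {N : ℕ} {x : ℕ → ℝ}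

theorem gramBM_eq_lowerOnes_mul_diagonal_mul_transpose (hx : MonotoneOn x (Set.Iic N))
    (hx0 : x 0 = 0) :
    gramBM N x = lowerOnes (Fin N) ℝ * diagonal (fun k : Fin N => x (k + 1) - x k) *
      (lowerOnes (Fin N) ℝ)ᵀ := by
  have hmono : Monotone fun k : Fin N => x (k + 1) := fun a b hab =>
    hx (Set.mem_Iic.2 a.2) (Set.mem_Iic.2 b.2) (by simpa using hab)
  ext i j
  calc gramBM N x i j = x ((i ⊓ j : Fin N) + 1) - x 0 := by
        rw [hx0, sub_zero, hmono.map_min]; rfl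
    _ = ∑ k ∈ Finset.Iic (i ⊓ j), (x (k + 1) - x k) := by
        rw [← Finset.sum_range_sub, Nat.range_succ_eq_Iic, ← Fin.map_valEmbedding_Iic,
          Finset.sum_map]
        rfl
    _ = _ := by
      rw [mul_apply, ← Finset.filter_ge_eq_Iic, Finset.sum_filter]
      refine Finset.sum_congr rfl fun k _ => ?_
      simp only [mul_diagonal, transpose_apply, lowerOnes, of_apply, le_inf_iff]
      split_ifs <;> simp_all

theorem isUnit_det_gramBM (hx : StrictMonoOn x (Set.Iic N)) (hx0 : x 0 = 0) :
    IsUnit (gramBM N x).det := by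
  rw [gramBM_eq_lowerOnes_mul_diagonal_mul_transpose hx.monotoneOn hx0, det_mul, det_mul,
    det_transpose, det_lowerOnes, det_diagonal, one_mul, mul_one]
  refine isUnit_iff_ne_zero.2 (Finset.prod_ne_zero_iff.2 fun k _ => sub_ne_zero.2 ?_)
  exact (hx (Set.mem_Iic.2 k.2.le) (Set.mem_Iic.2 k.2) k.1.lt_add_one).ne'

theorem gramBM_isSymm (N : ℕ) (x : ℕ → ℝ) : (gramBM N x).IsSymm :=
  ext fun _ _ => min_comm _ _

theorem gramBM_mulVec_single_one (k : Fin N) :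
    gramBM N x *ᵥ Pi.single k 1 = kappaBM N x (x (k + 1)) := by
  ext i
  simp [gramBM, kappaBM, mulVec_single, min_comm]

theorem kappaBM_eq_of_le (hx : MonotoneOn x (Set.Iic N)) {t : ℝ} (ht : x N ≤ t) :
    kappaBM N x t = kappaBM N x (x N) := by
  ext i
  have hi : x (i + 1) ≤ x N := hx (Set.mem_Iic.2 i.2) (Set.mem_Iic.2 le_rfl) i.2
  simp only [kappaBM, min_eq_right hi, min_eq_right (hi.trans ht)]

theorem sub_smul_kappaBM_of_mem_Icc (hx : MonotoneOn x (Set.Iic N)) {j : ℕ} (hj : j < N) {t : ℝ}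
    (hjt : x j ≤ t) (htj : t ≤ x (j + 1)) :
    (x (j + 1) - x j) • kappaBM N x t =
      (x (j + 1) - t) • kappaBM N x (x j) + (t - x j) • kappaBM N x (x (j + 1)) := by
  ext i
  refine sub_mul_min_eq_of_le_or_le hjt htj ?_
  rcases le_or_gt (i + 1 : ℕ) j with hij | hji
  · exact .inl (hx (Set.mem_Iic.2 (by omega)) (Set.mem_Iic.2 hj.le) hij)
  · exact .inr (hx (Set.mem_Iic.2 hj) (Set.mem_Iic.2 i.2) hji)

theorem kappaBM_node_dotProduct_inv_mulVec (hx : StrictMonoOn x (Set.Iic N)) (hx0 : x 0 = 0)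
    {v : ℕ → ℝ} (hv0 : v 0 = 0) {j : ℕ} (hj : j ≤ N) :
    kappaBM N x (x j) ⬝ᵥ (gramBM N x)⁻¹ *ᵥ (fun i : Fin N => v (i + 1)) = v j := by
  cases j with
  | zero =>
    have : kappaBM N x (x 0) = 0 := funext fun i => by
      simpa [kappaBM, hx0] using
        hx.monotoneOn (Set.mem_Iic.2 N.zero_le) (Set.mem_Iic.2 i.2) (Nat.zero_le _)
    rw [this, zero_dotProduct, hv0]
  | succ k =>
    rw [← gramBM_mulVec_single_one ⟨k, hj⟩,
      (gramBM_isSymm N x).dotProduct_inv_mulVec_of_mulVec_eq (isUnit_det_gramBM hx hx0) rfl,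
      single_one_dotProduct]

theorem sub_mul_kappaBM_dotProduct_inv_mulVec_of_mem_Icc (hx : StrictMonoOn x (Set.Iic N))
    (hx0 : x 0 = 0) {v : ℕ → ℝ} (hv0 : v 0 = 0) {j : ℕ} (hj : j < N) {t : ℝ} (hjt : x j ≤ t)
    (htj : t ≤ x (j + 1)) :
    (x (j + 1) - x j) * (kappaBM N x t ⬝ᵥ (gramBM N x)⁻¹ *ᵥ (fun i : Fin N => v (i + 1))) =
      (x (j + 1) - t) * v j + (t - x j) * v (j + 1) := by
  rw [← smul_eq_mul, ← smul_dotProduct, sub_smul_kappaBM_of_mem_Icc hx.monotoneOn hj hjt htj,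
    add_dotProduct, smul_dotProduct, smul_dotProduct,
    kappaBM_node_dotProduct_inv_mulVec hx hx0 hv0 hj.le,
    kappaBM_node_dotProduct_inv_mulVec hx hx0 hv0 hj, smul_eq_mul, smul_eq_mul]

end BrownianMotion

theorem posterior_mean_var_BM_general (N : ℕ) (T : ℝ) (x : ℕ → ℝ) (hx0 : x 0 = 0)
    (hmono : ∀ n < N, x n < x (n + 1))
    (v : ℕ → ℝ) (hv0 : v 0 = 0) :
    (∀ m, 1 ≤ m → m ≤ N → ∀ t : ℝ, x (m - 1) ≤ t → t ≤ x m →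
      (kappaBM N x t ⬝ᵥ (gramBM N x)⁻¹.mulVec (fun i : Fin N => v (i.1 + 1)) =
        ((x m - t) * v (m - 1) + (t - x (m - 1)) * v m) / (x m - x (m - 1)) ∧
      min t t - kappaBM N x t ⬝ᵥ (gramBM N x)⁻¹.mulVec (kappaBM N x t) =
        (x m - t) * (t - x (m - 1)) / (x m - x (m - 1)))) ∧
    (∀ t : ℝ, x N ≤ t → t ≤ T →
      (kappaBM N x t ⬝ᵥ (gramBM N x)⁻¹.mulVec (fun i : Fin N => v (i.1 + 1)) = v N ∧
      t - kappaBM N x t ⬝ᵥ (gramBM N x)⁻¹.mulVec (kappaBM N x t) = t - x N)) := by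
  have hx : StrictMonoOn x (Set.Iic N) := strictMonoOn_Iic_of_lt_succ hmono
  have hx_nonneg : ∀ j ≤ N, 0 ≤ x j := fun j hj =>
    hx0 ▸ hx.monotoneOn (Set.mem_Iic.2 N.zero_le) (Set.mem_Iic.2 hj) (Nat.zero_le j)
  have hmin_x0 : ∀ s : ℝ, 0 ≤ s → min s (x 0) = 0 := fun s hs => by rw [hx0, min_eq_right hs]
  refine ⟨fun m hm1 hmN t ht1 ht2 => ?_, fun t ht _ => ?_⟩
  · obtain ⟨j, rfl⟩ : ∃ j, m = j + 1 := ⟨m - 1, by omega⟩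
    rw [Nat.add_sub_cancel] at ht1 ⊢
    have hΔ : x (j + 1) - x j ≠ 0 := sub_ne_zero.2 (hmono j hmN).ne'
    have hmean := sub_mul_kappaBM_dotProduct_inv_mulVec_of_mem_Icc hx hx0 hv0 hmN ht1 ht2
    -- `κ(t)` is the data vector of `n ↦ min t (x n)`
    have hvar : (x (j + 1) - x j) * (kappaBM N x t ⬝ᵥ (gramBM N x)⁻¹ *ᵥ kappaBM N x t) =
        (x (j + 1) - t) * min t (x j) + (t - x j) * min t (x (j + 1)) :=
      sub_mul_kappaBM_dotProduct_inv_mulVec_of_mem_Icc hx hx0 (v := fun n => min t (x n))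
        (hmin_x0 t ((hx_nonneg j (by omega)).trans ht1)) hmN ht1 ht2
    rw [min_eq_right ht1, min_eq_left ht2] at hvar
    rw [eq_div_iff hΔ, eq_div_iff hΔ, min_self]
    exact ⟨by linear_combination hmean, by linear_combination -hvar⟩
  · rw [kappaBM_eq_of_le hx.monotoneOn ht]
    refine ⟨kappaBM_node_dotProduct_inv_mulVec hx hx0 hv0 le_rfl, ?_⟩
    have hvar : kappaBM N x (x N) ⬝ᵥ (gramBM N x)⁻¹ *ᵥ kappaBM N x (x N) = min (x N) (x N) :=
      kappaBM_node_dotProduct_inv_mulVec hx hx0 (v := fun n => min (x N) (x n))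
        (hmin_x0 _ (hx_nonneg N le_rfl)) le_rfl
    rw [hvar, min_self]

/-- For `0 = x_0 < x_1 < ⋯ < x_N ≤ T` and any `v ∈ ℝ^N` (with convention `v 0 = 0`):
(a) if `t ∈ [x_{m−1}, x_m]` for some `1 ≤ m ≤ N`, the posterior mean
`κ(t)ᵀK⁻¹v` is the linear interpolant `((x_m − t)v_{m−1} + (t − x_{m−1})v_m)/(x_m − x_{m−1})`
and the posterior variance is `min(t,t) − κ(t)ᵀK⁻¹κ(t) = (x_m − t)(t − x_{m−1})/(x_m − x_{m−1})`;
(b) if `t ∈ [x_N, T]`, then `κ(t)ᵀK⁻¹v = v_N` and `t − κ(t)ᵀK⁻¹κ(t) = t − x_N`. -/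
theorem posterior_mean_var_BM (N : ℕ) (T : ℝ) (x : ℕ → ℝ) (hx0 : x 0 = 0)
    (hmono : ∀ n < N, x n < x (n + 1)) (hxT : x N ≤ T)
    (v : ℕ → ℝ) (hv0 : v 0 = 0) :
    (∀ m, 1 ≤ m → m ≤ N → ∀ t : ℝ, x (m - 1) ≤ t → t ≤ x m →
      (kappaBM N x t ⬝ᵥ (gramBM N x)⁻¹.mulVec (fun i : Fin N => v (i.1 + 1)) =
        ((x m - t) * v (m - 1) + (t - x (m - 1)) * v m) / (x m - x (m - 1)) ∧
      min t t - kappaBM N x t ⬝ᵥ (gramBM N x)⁻¹.mulVec (kappaBM N x t) =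
        (x m - t) * (t - x (m - 1)) / (x m - x (m - 1)))) ∧
    (∀ t : ℝ, x N ≤ t → t ≤ T →
      (kappaBM N x t ⬝ᵥ (gramBM N x)⁻¹.mulVec (fun i : Fin N => v (i.1 + 1)) = v N ∧
      t - kappaBM N x t ⬝ᵥ (gramBM N x)⁻¹.mulVec (kappaBM N x t) = t - x N)) :=
  posterior_mean_var_BM_general N T x hx0 hmono v hv0
end

section
/- Let x_1, …, x_N be pairwise distinct points of a set Ω, k : Ω × Ω → ℝ a symmetric function such that for every subset S ⊆ {x_1, …, x_N} the Gram matrix K_S = (k(s,s'))_{s,s'∈S} is invertible, and f : Ω → ℝ. For 1 ≤ p ≤ N, define the leave-p-out cross-validation estimator σ̂_{CV(p)}² = (1/C(N,p)) Σ_{A ⊆ {1,…,N}, |A| = p} (1/p) Σ_{n ∈ A} (f(x_n) − m_{S_A}(x_n))² / k_{S_A}(x_n), where S_A = {x_i : i ∉ A}, m_S(x) = k(x,S)ᵀ K_S⁻¹ f_S and k_S(x) = k(x,x) − k(x,S)ᵀ K_S⁻¹ k(x,S) (with m_∅(x) = 0 and k_∅(x) = k(x,x)), and C(N,p) is the binomial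 coefficient. Then the maximum-likelihood scale estimator σ̂_ML² = (1/N) f(𝐱)ᵀ K⁻¹ f(𝐱), with K = (k(x_i,x_j))_{i,j=1}^N and f(𝐱) = (f(x_1),…,f(x_N)), satisfies σ̂_ML² = (1/N) Σ_{p=1}^{N} σ̂_{CV(p)}². -/
open Matrix

variable {Ω : Type*}

/-- The Gram matrix of a kernel `k` over a finite set `A ⊂ Ω`. -/
noncomputable def gramOn (k : Ω → Ω → ℝ) (A : Finset Ω) : Matrix A A ℝ :=
  Matrix.of fun a b => k a.1 b.1

/-- The posterior mean `m_S(x) = k(x,S)ᵀ K_S⁻¹ f_S` (with `m_∅(x) = 0`). -/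
noncomputable def postMean (k : Ω → Ω → ℝ) (f : Ω → ℝ) (S : Finset Ω) (x : Ω)
    [DecidableEq Ω] : ℝ :=
  (fun s : S => k x s.1) ⬝ᵥ (gramOn k S)⁻¹.mulVec fun s : S => f s.1

/-- The posterior variance `k_S(x) = k(x,x) − k(x,S)ᵀ K_S⁻¹ k(x,S)`
(with `k_∅(x) = k(x,x)`). -/
noncomputable def postVar (k : Ω → Ω → ℝ) (S : Finset Ω) (x : Ω) [DecidableEq Ω] : ℝ :=
  k x x - (fun s : S => k x s.1) ⬝ᵥ (gramOn k S)⁻¹.mulVec fun s : S => k x s.1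

/-- The leave-`p`-out cross-validation scale estimator
`σ̂_{CV(p)}² = (1/C(N,p)) Σ_{|A| = p} (1/p) Σ_{n ∈ A} (f(x_n) − m_{S_A}(x_n))²/k_{S_A}(x_n)`,
where `S_A = {x_i : i ∉ A}`. -/
noncomputable def sigmaCVp [DecidableEq Ω] (k : Ω → Ω → ℝ) (f : Ω → ℝ) (N : ℕ)
    (x : Fin N → Ω) (p : ℕ) : ℝ :=
  (1 / (N.choose p : ℝ)) *
    ∑ A ∈ Finset.powersetCard p (Finset.univ : Finset (Fin N)),
      (1 / (p : ℝ)) *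
        ∑ n ∈ A,
          (f (x n) - postMean k f (Finset.image x (Finset.univ \ A)) (x n)) ^ 2 /
            postVar k (Finset.image x (Finset.univ \ A)) (x n)

/-! Adding a point `t` to `T` increases `Q(T) = f_Tᵀ K_T⁻¹ f_T` by exactly the standardized
squared residual `(f t - m_T(t))² / k_T(t)`: this is the Schur complement of the bordered Gram
matrix. So every summand of `σ̂_{CV(p)}²` is an increment `Q(S_A ∪ {x_n}) - Q(S_A)`. Counting
the pairs `(A, n)` twice turns `σ̂_{CV(p)}²` into `E_{p-1} - E_p`, where `E_j` is the mean of `Q`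
over the sets with `j` of the points removed, and the sum over `p` telescopes to
`E_0 - E_N = Q({x_1, …, x_N}) - Q(∅) = f(𝐱)ᵀ K⁻¹ f(𝐱)`. -/

namespace Matrix

variable {m n K : Type*} [Fintype m] [DecidableEq m] [Fintype n] [DecidableEq n] [Field K]

theorem dotProduct_inv_mulVec_submatrix_equiv (M : Matrix m m K) (e : n ≃ m) (v : m → K) :
    (v ∘ e) ⬝ᵥ (M.submatrix e e)⁻¹ *ᵥ (v ∘ e) = v ⬝ᵥ M⁻¹ *ᵥ v := by
  rw [inv_submatrix_equiv, submatrix_mulVec_equiv, ← dotProduct_comp_equiv_symm]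
  simp [Function.comp_assoc]

theorem det_fromBlocks_replicateCol_replicateRow (A : Matrix m m K) (hA : IsUnit A)
    (b c : m → K) (d : K) :
    (fromBlocks A (replicateCol Unit b) (replicateRow Unit c) (of fun _ _ => d)).det =
      A.det * (d - c ⬝ᵥ A⁻¹ *ᵥ b) := by
  have := hA.invertible
  rw [det_fromBlocks₁₁, det_unique (n := Unit), invOf_eq_nonsing_inv, Matrix.mul_assoc,
    ← replicateCol_mulVec]
  rfl

theorem sumElim_dotProduct_inv_fromBlocks_mulVec (A : Matrix m m K) (hA : IsUnit A)
    (hAt : Aᵀ = A) (b g : m → K) (c d : K)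
    (hF : IsUnit (fromBlocks A (replicateCol Unit b) (replicateRow Unit b) (of fun _ _ => d))) :
    Sum.elim g (fun _ => c) ⬝ᵥ
        (fromBlocks A (replicateCol Unit b) (replicateRow Unit b) (of fun _ _ => d))⁻¹ *ᵥ
          Sum.elim g (fun _ => c) =
      g ⬝ᵥ A⁻¹ *ᵥ g + (c - b ⬝ᵥ A⁻¹ *ᵥ g) ^ 2 / (d - b ⬝ᵥ A⁻¹ *ᵥ b) := by
  have hs : d - b ⬝ᵥ A⁻¹ *ᵥ b ≠ 0 := by
    rw [isUnit_iff_isUnit_det, det_fromBlocks_replicateCol_replicateRow A hA] at hF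
    exact right_ne_zero_of_mul hF.ne_zero
  have hsymm : g ⬝ᵥ A⁻¹ *ᵥ b = b ⬝ᵥ A⁻¹ *ᵥ g := by
    rw [dotProduct_mulVec, ← mulVec_transpose, transpose_nonsing_inv, hAt, dotProduct_comm]
  set y := (c - b ⬝ᵥ A⁻¹ *ᵥ g) / (d - b ⬝ᵥ A⁻¹ *ᵥ b) with hy
  have hys : y * (d - b ⬝ᵥ A⁻¹ *ᵥ b) = c - b ⬝ᵥ A⁻¹ *ᵥ g := div_mul_cancel₀ _ hs
  -- Eliminating the last unknown first gives the solution of the bordered system explicitly.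
  have hsol : fromBlocks A (replicateCol Unit b) (replicateRow Unit b) (of fun _ _ => d) *ᵥ
      Sum.elim (A⁻¹ *ᵥ (g - y • b)) (fun _ => y) = Sum.elim g (fun _ => c) := by
    rw [fromBlocks_mulVec, Sum.elim_comp_inl, Sum.elim_comp_inr, mulVec_mulVec,
      mul_nonsing_inv A ((isUnit_iff_isUnit_det A).1 hA), one_mulVec]
    congr 1
    · ext i
      simp [mulVec, dotProduct, replicateCol, mul_comm]
    · ext
      have hd : ((of fun _ _ => d : Matrix Unit Unit K) *ᵥ fun _ => y) () = d * y := by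
        simp [mulVec, dotProduct]
      rw [Pi.add_apply, hd, replicateRow_mulVec_eq_const, Function.const_apply, mulVec_sub,
        mulVec_smul, dotProduct_sub, dotProduct_smul, smul_eq_mul]
      linear_combination hys
  have := hF.invertible
  have hc : (fun _ : Unit => c) ⬝ᵥ (fun _ => y) = c * y := by simp [dotProduct]
  rw [inv_mulVec_eq_vec hsol.symm, sumElim_dotProduct_sumElim, mulVec_sub, mulVec_smul,
    dotProduct_sub, dotProduct_smul, hsymm, smul_eq_mul, hc, hy]
  ring

end Matrix

open Finset

theorem Finset.sum_powersetCard_succ_sum_erase {ι M : Type*} [DecidableEq ι] [AddCommMonoid M]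
    (s : Finset ι) (p : ℕ) (h : Finset ι → M) :
    ∑ A ∈ s.powersetCard (p + 1), ∑ n ∈ A, h (A.erase n) =
      (#s - p) • ∑ B ∈ s.powersetCard p, h B := by
  have hcount : ∀ B ∈ s.powersetCard p, (#s - p) • h B = ∑ _n ∈ s \ B, h B := by
    intro B hB
    rw [mem_powersetCard] at hB
    rw [sum_const, card_sdiff_of_subset hB.1, hB.2]
  rw [smul_sum, sum_congr rfl hcount, sum_sigma', sum_sigma']
  refine sum_nbij' (fun a => ⟨a.1.erase a.2, a.2⟩) (fun b => ⟨insert b.2 b.1, b.2⟩) ?_ ?_ ?_ ?_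
    (fun _ _ => rfl)
  · simp +contextual [mem_powersetCard, subset_iff, card_erase_of_mem]
  · simp +contextual [mem_powersetCard, insert_subset_iff, card_insert_of_notMem]
  · simp +contextual [insert_erase]
  · simp +contextual

section LeaveOut

variable {ι R : Type*} [Fintype ι] [DecidableEq ι] [Field R] [CharZero R]

noncomputable def leaveOutMean (q : Finset ι → R) (j : ℕ) : R :=
  1 / ((Fintype.card ι).choose j : R) * ∑ B ∈ powersetCard j univ, q (univ \ B)

theorem leaveOutMean_zero (q : Finset ι → R) : leaveOutMean q 0 = q univ := by
  simp [leaveOutMean]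

theorem leaveOutMean_card (q : Finset ι → R) : leaveOutMean q (Fintype.card ι) = q ∅ := by
  rw [leaveOutMean, ← card_univ, powersetCard_self]
  simp

theorem mean_sum_erase_sub_eq_leaveOutMean_sub (q : Finset ι → R) {j : ℕ}
    (hj : j < Fintype.card ι) :
    1 / ((Fintype.card ι).choose (j + 1) : R) * ∑ A ∈ powersetCard (j + 1) univ,
        1 / ((j + 1 : ℕ) : R) * ∑ n ∈ A, (q (univ \ A.erase n) - q (univ \ A)) =
      leaveOutMean q j - leaveOutMean q (j + 1) := by
  have hinner : ∀ A ∈ powersetCard (j + 1) univ,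
      1 / ((j + 1 : ℕ) : R) * ∑ n ∈ A, (q (univ \ A.erase n) - q (univ \ A)) =
        1 / ((j + 1 : ℕ) : R) * ∑ n ∈ A, q (univ \ A.erase n) - q (univ \ A) := by
    intro A hA
    rw [mem_powersetCard] at hA
    rw [sum_sub_distrib, sum_const, hA.2, nsmul_eq_mul]
    field_simp
  have hcount := sum_powersetCard_succ_sum_erase univ j fun B => q (univ \ B)
  rw [card_univ] at hcount
  set N := Fintype.card ι
  have hweight : 1 / (N.choose (j + 1) : R) * (1 / ((j + 1 : ℕ) : R)) * (N - j : ℕ) =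
      1 / (N.choose j : R) := by
    have hchoose : (N.choose (j + 1) * (j + 1) : R) = N.choose j * (N - j : ℕ) := by
      exact_mod_cast Nat.choose_succ_right_eq N j
    have hpos : (N.choose j : R) ≠ 0 := Nat.cast_ne_zero.2 (Nat.choose_pos hj.le).ne'
    have hpos' : (N.choose (j + 1) : R) ≠ 0 := Nat.cast_ne_zero.2 (Nat.choose_pos hj).ne'
    field_simp
    push_cast
    linear_combination -hchoose
  rw [sum_congr rfl hinner, sum_sub_distrib, ← mul_sum, hcount, nsmul_eq_mul, leaveOutMean,
    leaveOutMean]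
  linear_combination (∑ B ∈ powersetCard j univ, q (univ \ B)) * hweight

theorem sum_Icc_mean_sum_erase_sub (q : Finset ι → R) :
    ∑ p ∈ Icc 1 (Fintype.card ι), 1 / ((Fintype.card ι).choose p : R) *
        ∑ A ∈ powersetCard p univ, 1 / (p : R) * ∑ n ∈ A, (q (univ \ A.erase n) - q (univ \ A)) =
      q univ - q ∅ := by
  rw [← Ico_add_one_right_eq_Icc, sum_Ico_eq_sum_range, Nat.add_sub_cancel]
  rw [sum_congr rfl fun j hj => by
    rw [add_comm, mean_sum_erase_sub_eq_leaveOutMean_sub q (mem_range.1 hj)]]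
  rw [sum_range_sub', leaveOutMean_zero, leaveOutMean_card]

end LeaveOut

section Gram

variable (k : Ω → Ω → ℝ) (f : Ω → ℝ)

theorem gramOn_transpose (hk : ∀ a b, k a b = k b a) (S : Finset Ω) :
    (gramOn k S)ᵀ = gramOn k S := by
  ext i j
  exact hk _ _

variable [DecidableEq Ω]

noncomputable def gramQuadForm (T : Finset Ω) : ℝ :=
  (fun s : T => f s.1) ⬝ᵥ (gramOn k T)⁻¹ *ᵥ fun s : T => f s.1

theorem gramQuadForm_empty : gramQuadForm k f ∅ = 0 := by
  simp [gramQuadForm, dotProduct]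

theorem gramQuadForm_image_univ {ι : Type*} [Fintype ι] [DecidableEq ι] {x : ι → Ω}
    (hx : Function.Injective x) :
    gramQuadForm k f (univ.image x) =
      (fun i => f (x i)) ⬝ᵥ (of fun i j => k (x i) (x j))⁻¹ *ᵥ fun i => f (x i) := by
  let e : ι ≃ univ.image x :=
    (Equiv.ofInjective x hx).trans (Equiv.subtypeEquivRight fun a => by simp)
  exact (dotProduct_inv_mulVec_submatrix_equiv (gramOn k _) e _).symm

def Finset.insertEquivSumUnit {S : Finset Ω} {t : Ω} (ht : t ∉ S) :
    S ⊕ Unit ≃ (insert t S : Finset Ω) :=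
  ((subtypeInsertEquivOption ht).trans (Equiv.optionEquivSumPUnit S)).symm

theorem gramOn_insert_submatrix (hk : ∀ a b, k a b = k b a) {S : Finset Ω} {t : Ω}
    (ht : t ∉ S) :
    (gramOn k (insert t S)).submatrix (insertEquivSumUnit ht) (insertEquivSumUnit ht) =
      fromBlocks (gramOn k S) (replicateCol Unit fun s : S => k t s)
        (replicateRow Unit fun s : S => k t s) (of fun _ _ => k t t) := by
  ext (i | i) (j | j) <;>
    simp [gramOn, insertEquivSumUnit, subtypeInsertEquivOption, hk t]

theorem gramQuadForm_insert (hk : ∀ a b, k a b = k b a) {S : Finset Ω} {t : Ω} (ht : t ∉ S)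
    (hS : IsUnit (gramOn k S)) (hT : IsUnit (gramOn k (insert t S))) :
    gramQuadForm k f (insert t S) =
      gramQuadForm k f S + (f t - postMean k f S t) ^ 2 / postVar k S t := by
  have hF := (isUnit_submatrix_equiv (insertEquivSumUnit ht) (insertEquivSumUnit ht)).2 hT
  rw [gramOn_insert_submatrix k hk ht] at hF
  have hvec : (fun s : (insert t S : Finset Ω) => f s) ∘ insertEquivSumUnit ht =
      Sum.elim (fun s : S => f s) fun _ => f t := by
    ext (s | s) <;> simp [insertEquivSumUnit, subtypeInsertEquivOption]
  rw [gramQuadForm, ← dotProduct_inv_mulVec_submatrix_equiv _ (insertEquivSumUnit ht), hvec,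
    gramOn_insert_submatrix k hk ht,
    sumElim_dotProduct_inv_fromBlocks_mulVec _ hS (gramOn_transpose k hk S) _ _ _ _ hF]
  rfl

end Gram

/-- If `x_1, …, x_N` are pairwise distinct, `k` is symmetric and every Gram submatrix over a
subset of `{x_1, …, x_N}` is invertible, then the ML scale estimator
`σ̂_ML² = (1/N) f(𝐱)ᵀ K⁻¹ f(𝐱)` is the average of the leave-`p`-out CV estimators:
`σ̂_ML² = (1/N) Σ_{p=1}^{N} σ̂_{CV(p)}²`. -/
theorem ml_eq_average_lpo [DecidableEq Ω] (k : Ω → Ω → ℝ)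
    (hsym : ∀ a b, k a b = k b a) (N : ℕ) (x : Fin N → Ω) (hinj : Function.Injective x)
    (f : Ω → ℝ)
    (hinv : ∀ S : Finset Ω, S ⊆ Finset.image x Finset.univ → IsUnit (gramOn k S)) :
    (1 / (N : ℝ)) *
        ((fun i => f (x i)) ⬝ᵥ
          (Matrix.of fun i j : Fin N => k (x i) (x j))⁻¹.mulVec fun i => f (x i)) =
      (1 / (N : ℝ)) * ∑ p ∈ Finset.Icc 1 N, sigmaCVp k f N x p := by
  set q : Finset (Fin N) → ℝ := fun B => gramQuadForm k f (B.image x)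
  have hunit (B : Finset (Fin N)) : IsUnit (gramOn k (B.image x)) :=
    hinv _ (image_subset_image (subset_univ B))
  have hresidual (A : Finset (Fin N)) (n : Fin N) (hn : n ∈ A) :
      (f (x n) - postMean k f ((univ \ A).image x) (x n)) ^ 2 /
          postVar k ((univ \ A).image x) (x n) = q (univ \ A.erase n) - q (univ \ A) := by
    have hnot : x n ∉ (univ \ A).image x := by simp [hinj.eq_iff, hn]
    have hins : (univ \ A.erase n).image x = insert (x n) ((univ \ A).image x) := by
      rw [sdiff_erase (mem_univ n), image_insert]
    have hunit_insert := hunit (univ \ A.erase n)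
    rw [hins] at hunit_insert
    simp only [q]
    rw [hins, gramQuadForm_insert k f hsym hnot (hunit _) hunit_insert]
    ring
  have hcv : ∑ p ∈ Icc 1 N, sigmaCVp k f N x p = q univ - q ∅ := by
    have htel := sum_Icc_mean_sum_erase_sub (R := ℝ) q
    rw [Fintype.card_fin] at htel
    rw [← htel]
    refine sum_congr rfl fun p _ => ?_
    exact congrArg _ (sum_congr rfl fun A _ => congrArg _ (sum_congr rfl (hresidual A)))
  rw [hcv, ← gramQuadForm_image_univ k f hinj]
  simp only [q, image_empty, gramQuadForm_empty, sub_zero]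
end
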